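/- arXiv:2306.11262 — 6 statements merged into one kernel-verified Lean document; each statement's English description precedes it below -/
import Mathlib

section
/- Let (x_n), (y_n), (z_n) be sequences of complex numbers, and for each n let g_n = [[1, x_n, y_n],[0, 1, z_n],[0, 0, 1]] ∈ SL(3,ℂ). Assume the sequence (g_n) is unbounded, i.e., the set {‖g_n‖ : n ∈ ℕ} is not bounded above. Then (g_n) is regular (that is, ‖g_n‖²/‖g_n⁻¹‖ → ∞) if and only if (|x_n|² + |y_n|² + |z_n|²)/(|x_n| + |z_n| + |x_n z_n − y_n|) → ∞ as n → ∞. -/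
open Filter

/-- Frobenius (entrywise ℓ²) norm of a 3×3 complex matrix. -/
noncomputable def frobNormC (g : Matrix (Fin 3) (Fin 3) ℂ) : ℝ :=
  Real.sqrt (∑ i, ∑ j, ‖g i j‖ ^ 2)

/-- A sequence in SL(3,ℂ) is regular if ‖gₙ‖²/‖gₙ⁻¹‖ → ∞. -/
def IsRegularSeqC (g : ℕ → Matrix.SpecialLinearGroup (Fin 3) ℂ) : Prop :=
  Tendsto (fun n => (frobNormC ↑(g n)) ^ 2 / frobNormC ↑((g n)⁻¹)) atTop atTop


lemma ptwise_fwd (a b c d M : ℝ)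
    (ha : 0 ≤ a) (hb : 0 ≤ b) (hc : 0 ≤ c) (hd : 0 ≤ d)
    (hbd : b ≤ d + a * c) (hM : 1 ≤ M)
    (hn : 4 * (M + 3) ≤ (3 + (a ^ 2 + b ^ 2 + c ^ 2)) / Real.sqrt (3 + (a ^ 2 + c ^ 2 + d ^ 2))) :
    M ≤ (a ^ 2 + b ^ 2 + c ^ 2) / (a + c + d) := by
  have hS0 : 0 ≤ a ^ 2 + b ^ 2 + c ^ 2 := by positivity
  have hW0 : 0 ≤ a ^ 2 + c ^ 2 + d ^ 2 := by positivity
  have hNpos : 0 < Real.sqrt (3 + (a ^ 2 + c ^ 2 + d ^ 2)) := Real.sqrt_pos.2 (by linarith)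
  have hN4 : (1 + (a + c + d)) / 4 ≤ Real.sqrt (3 + (a ^ 2 + c ^ 2 + d ^ 2)) := by
    rw [Real.le_sqrt (by linarith) (by linarith)]
    nlinarith [sq_nonneg (a - c), sq_nonneg (a - d), sq_nonneg (c - d),
      sq_nonneg (a - 1), sq_nonneg (c - 1), sq_nonneg (d - 1)]
  have key : (M + 3) * (1 + (a + c + d)) ≤ 3 + (a ^ 2 + b ^ 2 + c ^ 2) := by
    have h1 : 4 * (M + 3) * Real.sqrt (3 + (a ^ 2 + c ^ 2 + d ^ 2)) ≤
        3 + (a ^ 2 + b ^ 2 + c ^ 2) := by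
      rw [← le_div_iff₀ hNpos]; exact hn
    calc (M + 3) * (1 + (a + c + d))
        = 4 * (M + 3) * ((1 + (a + c + d)) / 4) := by ring
      _ ≤ 4 * (M + 3) * Real.sqrt (3 + (a ^ 2 + c ^ 2 + d ^ 2)) := by
          apply mul_le_mul_of_nonneg_left hN4; linarith
      _ ≤ _ := h1
  have hTpos : 0 < a + c + d := by
    rcases lt_or_ge 0 (a + c + d) with h | h
    · exact h
    · exfalso
      have ha0 : a = 0 := le_antisymm (by nlinarith) ha
      have hc0 : c = 0 := le_antisymm (by nlinarith) hc
      have hd0 : d = 0 := le_antisymm (by nlinarith) hd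
      have hb0 : b = 0 := le_antisymm (by nlinarith) hb
      rw [ha0, hc0, hd0, hb0] at key
      nlinarith
  rw [le_div_iff₀ hTpos]
  nlinarith

lemma ptwise_bwd (a b c d M : ℝ)
    (ha : 0 ≤ a) (hb : 0 ≤ b) (hc : 0 ≤ c) (hd : 0 ≤ d)
    (hbd : b ≤ d + a * c) (hM : 1 ≤ M)
    (hn : max (3 * M) 7 ≤ (a ^ 2 + b ^ 2 + c ^ 2) / (a + c + d)) :
    M ≤ (3 + (a ^ 2 + b ^ 2 + c ^ 2)) / Real.sqrt (3 + (a ^ 2 + c ^ 2 + d ^ 2)) := by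
  have hS0 : 0 ≤ a ^ 2 + b ^ 2 + c ^ 2 := by positivity
  have hW0 : 0 ≤ a ^ 2 + c ^ 2 + d ^ 2 := by positivity
  have hNpos : 0 < Real.sqrt (3 + (a ^ 2 + c ^ 2 + d ^ 2)) := Real.sqrt_pos.2 (by linarith)
  have hTpos : 0 < a + c + d := by
    rcases lt_or_ge 0 (a + c + d) with h | h
    · exact h
    · exfalso
      have ha0 : a = 0 := le_antisymm (by nlinarith) ha
      have hc0 : c = 0 := le_antisymm (by nlinarith) hc
      have hd0 : d = 0 := le_antisymm (by nlinarith) hd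
      have hT0 : a + c + d = 0 := by rw [ha0, hc0, hd0]; ring
      rw [hT0, div_zero] at hn
      have := le_max_right (3 * M) 7
      linarith
  rw [le_div_iff₀ hTpos] at hn
  have hn7 : 7 * (a + c + d) ≤ a ^ 2 + b ^ 2 + c ^ 2 := by
    have := le_max_right (3 * M) 7
    nlinarith
  have hn3 : 3 * M * (a + c + d) ≤ a ^ 2 + b ^ 2 + c ^ 2 := by
    have := le_max_left (3 * M) 7
    nlinarith
  have haT : a ≤ a + c + d := by linarith
  have hcT : c ≤ a + c + d := by linarith
  have hdT : d ≤ a + c + d := by linarith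
  have h1 : a ^ 2 ≤ (a + c + d) ^ 2 := by nlinarith
  have h2 : c ^ 2 ≤ (a + c + d) ^ 2 := by nlinarith
  have h3 : d ^ 2 ≤ (a + c + d) ^ 2 := by nlinarith
  have hT1 : 1 ≤ a + c + d := by
    by_contra h
    push_neg at h
    have ha1 : a ≤ 1 := le_of_lt (lt_of_le_of_lt haT h)
    have hac : a * c ≤ c := mul_le_of_le_one_left hc ha1
    have hbT : b ≤ 2 * (a + c + d) := by linarith
    have h4 : b ^ 2 ≤ 4 * (a + c + d) ^ 2 := by nlinarith [pow_le_pow_left₀ hb hbT 2]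
    have h5 : (a + c + d) ^ 2 < a + c + d := by
      rw [pow_two]; exact mul_lt_of_lt_one_left hTpos h
    linarith
  have hN3 : Real.sqrt (3 + (a ^ 2 + c ^ 2 + d ^ 2)) ≤ 3 * (a + c + d) := by
    rw [show (3 : ℝ) * (a + c + d) = Real.sqrt ((3 * (a + c + d)) ^ 2) by
      rw [Real.sqrt_sq (by linarith)]]
    apply Real.sqrt_le_sqrt
    nlinarith [(one_le_pow₀ hT1 : (1:ℝ) ≤ (a + c + d) ^ 2)]
  rw [le_div_iff₀ hNpos]
  calc M * Real.sqrt (3 + (a ^ 2 + c ^ 2 + d ^ 2))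
      ≤ M * (3 * (a + c + d)) := by
        apply mul_le_mul_of_nonneg_left hN3; linarith
    _ ≤ a ^ 2 + b ^ 2 + c ^ 2 := by linarith
    _ ≤ 3 + (a ^ 2 + b ^ 2 + c ^ 2) := by linarith

lemma aux_iff (a b c d : ℕ → ℝ)
    (ha : ∀ n, 0 ≤ a n) (hb : ∀ n, 0 ≤ b n) (hc : ∀ n, 0 ≤ c n) (hd : ∀ n, 0 ≤ d n)
    (hbd : ∀ n, b n ≤ d n + a n * c n) :
    Tendsto (fun n => (3 + (a n ^ 2 + b n ^ 2 + c n ^ 2)) /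
        Real.sqrt (3 + (a n ^ 2 + c n ^ 2 + d n ^ 2))) atTop atTop ↔
    Tendsto (fun n => (a n ^ 2 + b n ^ 2 + c n ^ 2) / (a n + c n + d n)) atTop atTop := by
  constructor
  · intro hR
    rw [tendsto_atTop] at hR ⊢
    intro M
    filter_upwards [hR (4 * (max M 1 + 3))] with n hn
    exact le_trans (le_max_left M 1)
      (ptwise_fwd (a n) (b n) (c n) (d n) (max M 1) (ha n) (hb n) (hc n) (hd n)
        (hbd n) (le_max_right M 1) hn)
  · intro hQ
    rw [tendsto_atTop] at hQ ⊢
    intro M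
    filter_upwards [hQ (max (3 * max M 1) 7)] with n hn
    exact le_trans (le_max_left M 1)
      (ptwise_bwd (a n) (b n) (c n) (d n) (max M 1) (ha n) (hb n) (hc n) (hd n)
        (hbd n) (le_max_right M 1) hn)

lemma frob_tri (x y z : ℂ) :
    frobNormC !![1, x, y; 0, 1, z; 0, 0, 1]
      = Real.sqrt (3 + (‖x‖ ^ 2 + ‖y‖ ^ 2 + ‖z‖ ^ 2)) := by
  simp [frobNormC, Fin.sum_univ_three, Matrix.vecHead, Matrix.vecTail]
  ring_nf

lemma adj_tri (x y z : ℂ) :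
    (!![1, x, y; 0, 1, z; 0, 0, 1] : Matrix (Fin 3) (Fin 3) ℂ).adjugate
      = !![1, -x, x * z - y; 0, 1, -z; 0, 0, 1] := by
  have h1 : (!![1, x, y; 0, 1, z; 0, 0, 1] : Matrix (Fin 3) (Fin 3) ℂ) *
      !![1, -x, x * z - y; 0, 1, -z; 0, 0, 1] = 1 := by
    ext i j
    fin_cases i <;> fin_cases j <;>
      simp [Matrix.mul_apply, Fin.sum_univ_three, Matrix.one_apply,
        Matrix.vecHead, Matrix.vecTail] <;> ring
  have hdet : (!![1, x, y; 0, 1, z; 0, 0, 1] : Matrix (Fin 3) (Fin 3) ℂ).det = 1 := by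
    simp [Matrix.det_fin_three, Matrix.vecHead, Matrix.vecTail]
  have h2 : (!![1, x, y; 0, 1, z; 0, 0, 1] : Matrix (Fin 3) (Fin 3) ℂ) *
      (!![1, x, y; 0, 1, z; 0, 0, 1] : Matrix (Fin 3) (Fin 3) ℂ).adjugate = 1 := by
    rw [Matrix.mul_adjugate, hdet, one_smul]
  rw [← Matrix.inv_eq_right_inv h2, Matrix.inv_eq_right_inv h1]

/-- Criterion for regularity of an unbounded sequence of upper unitriangular
matrices in SL(3,ℂ) (Lemma 2.3). -/
theorem regular_iff_unitriangular_quotient_tendsto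
    (x y z : ℕ → ℂ)
    (g : ℕ → Matrix.SpecialLinearGroup (Fin 3) ℂ)
    (hg : ∀ n, (g n : Matrix (Fin 3) (Fin 3) ℂ) =
      !![1, x n, y n; 0, 1, z n; 0, 0, 1])
    (hunb : ¬ BddAbove (Set.range fun n => frobNormC ↑(g n))) :
    IsRegularSeqC g ↔
      Tendsto
        (fun n => (‖x n‖ ^ 2 + ‖y n‖ ^ 2 + ‖z n‖ ^ 2) /
          (‖x n‖ + ‖z n‖ + ‖x n * z n - y n‖))
        atTop atTop := by
  have hinv : ∀ n, (↑((g n)⁻¹) : Matrix (Fin 3) (Fin 3) ℂ)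
      = !![1, -(x n), x n * z n - y n; 0, 1, -(z n); 0, 0, 1] := by
    intro n
    rw [Matrix.SpecialLinearGroup.coe_inv, hg n, adj_tri]
  have hEq : ∀ n, (frobNormC ↑(g n)) ^ 2 / frobNormC ↑((g n)⁻¹)
      = (3 + (‖x n‖ ^ 2 + ‖y n‖ ^ 2 + ‖z n‖ ^ 2)) /
        Real.sqrt (3 + (‖x n‖ ^ 2 + ‖z n‖ ^ 2 + ‖x n * z n - y n‖ ^ 2)) := by
    intro n
    rw [hg n, hinv n, frob_tri, frob_tri,
      Real.sq_sqrt (by positivity)]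
    simp only [norm_neg]
    ring_nf
  have := aux_iff (fun n => ‖x n‖) (fun n => ‖y n‖) (fun n => ‖z n‖)
    (fun n => ‖x n * z n - y n‖)
    (fun n => norm_nonneg _) (fun n => norm_nonneg _) (fun n => norm_nonneg _)
    (fun n => norm_nonneg _)
    (fun n => by
      calc ‖y n‖ = ‖x n * z n - (x n * z n - y n)‖ := by ring_nf
        _ ≤ ‖x n * z n‖ + ‖x n * z n - y n‖ := norm_sub_le _ _
        _ = ‖x n * z n - y n‖ + ‖x n‖ * ‖z n‖ := by rw [norm_mul]; ring)
  rw [IsRegularSeqC]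
  simp only [hEq]
  exact this
end

section
/- Let a₁, b₁, c₁, a₂, b₂, c₂ ∈ ℝ and let A = [[1, a₁, b₁],[0, 1, c₁],[0, 0, 1]] and B = [[1, a₂, b₂],[0, 1, c₂],[0, 0, 1]] be elements of SL(3,ℝ) with A·B = B·A. If the homomorphism ρ : ℤ² → SL(3,ℝ) defined by ρ(n, m) = Aⁿ·Bᵐ is regular, then a₁c₂ = 0 and a₂c₁ = 0. -/
open Filter

/-- Frobenius (entrywise ℓ²) norm of a 3×3 real matrix. -/
noncomputable def frobNorm (g : Matrix (Fin 3) (Fin 3) ℝ) : ℝ :=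
  Real.sqrt (∑ i, ∑ j, (g i j) ^ 2)

/-- A sequence in SL(3,ℝ) is regular if ‖gₙ‖²/‖gₙ⁻¹‖ → ∞. -/
def IsRegularSeq (g : ℕ → Matrix.SpecialLinearGroup (Fin 3) ℝ) : Prop :=
  Tendsto (fun n => (frobNorm ↑(g n)) ^ 2 / frobNorm ↑((g n)⁻¹)) atTop atTop

/-!
Commutation of `A` and `B` means `a₁c₂ = a₂c₁`. If this number were nonzero, then
`(c₁, c₂) = λ (a₁, a₂)` with `λ ≠ 0`, and `AⁿBᵐ` is unitriangular with superdiagonal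
`(x, λx)`, `x = n a₁ + m a₂`, and corner `z = λx²/2 + (a linear form in n, m)`. For `n` of a
suitable sign the quadratic `m ↦ z` has a real root, and the nearest integer `m` gives
`|z| = O(1 + |x|)`. The corner `λx² - z` of the inverse is then of order `x²`, so `‖g‖²` and
`‖g⁻¹‖` are both of order `1 + x²` and `‖g‖² / ‖g⁻¹‖` stays bounded along these injective
pairs `(n, m)`: not regular.
-/

open Matrix

section UnitriMatrix

variable {R : Type*} [CommRing R]

def unitriMatrix (x y z : R) : Matrix (Fin 3) (Fin 3) R := !![1, x, z; 0, 1, y; 0, 0, 1]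

theorem unitriMatrix_zero : unitriMatrix (0 : R) 0 0 = 1 := by
  rw [unitriMatrix, one_fin_three]

theorem unitriMatrix_mul (x y z x' y' z' : R) :
    unitriMatrix x y z * unitriMatrix x' y' z' =
      unitriMatrix (x + x') (y + y') (z + z' + x * y') := by
  simp only [unitriMatrix, mul_fin_three]
  ring_nf

theorem unitriMatrix_mul_comm_iff {x y z x' y' z' : R} :
    unitriMatrix x y z * unitriMatrix x' y' z' = unitriMatrix x' y' z' * unitriMatrix x y z ↔
      x * y' = x' * y := by
  rw [unitriMatrix_mul, unitriMatrix_mul]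
  constructor
  · intro h
    have h₀₂ := congrFun (congrFun h 0) 2
    simp only [unitriMatrix, of_apply, cons_val', cons_val, cons_val_fin_one, cons_val_zero] at h₀₂
    linear_combination h₀₂
  · intro h
    rw [add_comm x, add_comm y, add_comm z, h]

theorem Matrix.SpecialLinearGroup.coe_inv_eq_unitriMatrix {g : SpecialLinearGroup (Fin 3) R}
    {x y z : R} (hg : (g : Matrix (Fin 3) (Fin 3) R) = unitriMatrix x y z) :
    ((g⁻¹ : SpecialLinearGroup (Fin 3) R) : Matrix (Fin 3) (Fin 3) R) =
      unitriMatrix (-x) (-y) (x * y - z) := by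
  have hright : unitriMatrix x y z * unitriMatrix (-x) (-y) (x * y - z) = 1 := by
    rw [unitriMatrix_mul, ← unitriMatrix_zero]
    congr 1 <;> ring
  calc ((g⁻¹ : SpecialLinearGroup (Fin 3) R) : Matrix (Fin 3) (Fin 3) R)
      = ↑(g⁻¹ * g) * unitriMatrix (-x) (-y) (x * y - z) := by
        rw [SpecialLinearGroup.coe_mul, mul_assoc, hg, hright, mul_one]
    _ = unitriMatrix (-x) (-y) (x * y - z) := by simp

end UnitriMatrix

theorem Matrix.SpecialLinearGroup.coe_zpow_eq_unitriMatrix {g : SpecialLinearGroup (Fin 3) ℝ}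
    {x y z : ℝ} (hg : (g : Matrix (Fin 3) (Fin 3) ℝ) = unitriMatrix x y z) (n : ℤ) :
    ((g ^ n : SpecialLinearGroup (Fin 3) ℝ) : Matrix (Fin 3) (Fin 3) ℝ) =
      unitriMatrix (n * x) (n * y) (n * z + n * (n - 1) / 2 * (x * y)) := by
  induction n using Int.induction_on with
  | zero => simp [unitriMatrix_zero]
  | succ k ih =>
    rw [_root_.zpow_add_one, coe_mul, ih, hg, unitriMatrix_mul]
    push_cast
    ring_nf
  | pred k ih =>
    rw [_root_.zpow_sub_one, coe_mul, ih, coe_inv_eq_unitriMatrix hg, unitriMatrix_mul]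
    push_cast
    ring_nf

theorem frobNorm_unitriMatrix (x y z : ℝ) :
    frobNorm (unitriMatrix x y z) = √(3 + x ^ 2 + y ^ 2 + z ^ 2) := by
  rw [frobNorm]
  congr 1
  simp only [unitriMatrix, Fin.sum_univ_three, of_apply, cons_val', cons_val_zero, cons_val_one,
    cons_val, cons_val_fin_one]
  ring

theorem frobNorm_sq_div_frobNorm_inv {g : SpecialLinearGroup (Fin 3) ℝ} {x y z : ℝ}
    (hg : (g : Matrix (Fin 3) (Fin 3) ℝ) = unitriMatrix x y z) :
    frobNorm ↑g ^ 2 / frobNorm ↑g⁻¹ =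
      (3 + x ^ 2 + y ^ 2 + z ^ 2) / √(3 + x ^ 2 + y ^ 2 + (x * y - z) ^ 2) := by
  rw [SpecialLinearGroup.coe_inv_eq_unitriMatrix hg, hg, frobNorm_unitriMatrix,
    frobNorm_unitriMatrix, Real.sq_sqrt (by positivity), neg_sq, neg_sq]

theorem Matrix.SpecialLinearGroup.coe_zpow_mul_zpow_eq_unitriMatrix
    {g h : SpecialLinearGroup (Fin 3) ℝ} {lam a₁ b₁ a₂ b₂ : ℝ}
    (hg : (g : Matrix (Fin 3) (Fin 3) ℝ) = unitriMatrix a₁ (lam * a₁) b₁)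
    (hh : (h : Matrix (Fin 3) (Fin 3) ℝ) = unitriMatrix a₂ (lam * a₂) b₂) (n m : ℤ) :
    ((g ^ n * h ^ m : SpecialLinearGroup (Fin 3) ℝ) : Matrix (Fin 3) (Fin 3) ℝ) =
      unitriMatrix (n * a₁ + m * a₂) (lam * (n * a₁ + m * a₂))
        (lam * (n * a₁ + m * a₂) ^ 2 / 2 + n * (b₁ - lam * a₁ ^ 2 / 2) +
          m * (b₂ - lam * a₂ ^ 2 / 2)) := by
  rw [coe_mul, coe_zpow_eq_unitriMatrix hg, coe_zpow_eq_unitriMatrix hh, unitriMatrix_mul]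
  ring_nf

theorem exists_int_abs_quadratic_le {a b c : ℝ} (ha : a ≠ 0) (hd : 0 ≤ discrim a b c) :
    ∃ m : ℤ, |a * m ^ 2 + b * m + c| ≤ (|2 * a * m + b| + |a|) / 2 := by
  obtain ⟨r, hr⟩ := exists_quadratic_eq_zero ha ⟨√(discrim a b c), (Real.mul_self_sqrt hd).symm⟩
  refine ⟨round r, ?_⟩
  set δ : ℝ := round r - r
  have hδ : |δ| ≤ 1 / 2 := by rw [abs_sub_comm]; exact abs_sub_round r
  -- subtracting `a r² + b r + c = 0` factors out `δ`
  have hfactor : a * (round r : ℝ) ^ 2 + b * round r + c = δ * (2 * a * round r + b - a * δ) := by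
    linear_combination hr
  rw [hfactor, abs_mul]
  calc |δ| * |2 * a * round r + b - a * δ| ≤ 1 / 2 * (|2 * a * round r + b| + |a| * 1) := by
        gcongr
        exact (abs_sub _ _).trans (by rw [abs_mul]; gcongr; linarith)
    _ = _ := by ring

theorem exists_int_abs_le_one_add_abs {lam a₁ a₂ β₁ β₂ n : ℝ} (hlam : lam ≠ 0) (ha₂ : a₂ ≠ 0)
    (hn : 0 ≤ β₂ ^ 2 + 2 * lam * a₂ * (a₁ * β₂ - a₂ * β₁) * n) :
    ∃ m : ℤ, |lam * (n * a₁ + m * a₂) ^ 2 / 2 + n * β₁ + m * β₂| ≤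
      (|lam * a₂| + |β₂| + |lam * a₂ ^ 2|) * (1 + |n * a₁ + m * a₂|) := by
  -- `hn` says that the discriminant in `m` is nonnegative
  obtain ⟨m, hm⟩ := exists_int_abs_quadratic_le (a := lam * a₂ ^ 2 / 2)
    (b := lam * a₁ * a₂ * n + β₂) (c := lam * a₁ ^ 2 * n ^ 2 / 2 + n * β₁) (by positivity)
    (by convert hn using 1; rw [discrim]; ring)
  refine ⟨m, ?_⟩
  have hderiv : |2 * (lam * a₂ ^ 2 / 2) * m + (lam * a₁ * a₂ * n + β₂)| ≤
      |lam * a₂| * |n * a₁ + m * a₂| + |β₂| := by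
    rw [← abs_mul]
    exact le_of_eq_of_le (by ring_nf) (abs_add_le _ _)
  have hlead : |lam * a₂ ^ 2 / 2| ≤ |lam * a₂ ^ 2| := by
    rw [abs_div, abs_two]
    linarith [abs_nonneg (lam * a₂ ^ 2)]
  calc _ = |lam * a₂ ^ 2 / 2 * m ^ 2 + (lam * a₁ * a₂ * n + β₂) * m +
          (lam * a₁ ^ 2 * n ^ 2 / 2 + n * β₁)| := by ring_nf
    _ ≤ _ := hm
    _ ≤ _ := by
      nlinarith [abs_nonneg (n * a₁ + m * a₂), abs_nonneg (lam * a₂), abs_nonneg β₂,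
        abs_nonneg (lam * a₂ ^ 2)]

theorem exists_injective_abs_le_one_add_abs {lam a₁ a₂ β₁ β₂ : ℝ} (hlam : lam ≠ 0)
    (ha₂ : a₂ ≠ 0) :
    ∃ γ : ℕ → ℤ × ℤ, Function.Injective γ ∧ ∃ K : ℝ, ∀ k,
      |lam * ((γ k).1 * a₁ + (γ k).2 * a₂) ^ 2 / 2 + (γ k).1 * β₁ + (γ k).2 * β₂| ≤
        K * (1 + |(γ k).1 * a₁ + (γ k).2 * a₂|) := by
  set ν := 2 * lam * a₂ * (a₁ * β₂ - a₂ * β₁)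
  obtain ⟨ε, hε, hεν⟩ : ∃ ε : ℤ, ε ≠ 0 ∧ 0 ≤ ν * ε := by
    rcases le_total 0 ν with h | h
    · exact ⟨1, one_ne_zero, by simpa⟩
    · exact ⟨-1, by norm_num, by simpa⟩
  have hdisc (k : ℕ) : 0 ≤ β₂ ^ 2 + ν * (ε * k : ℤ) := by
    push_cast
    nlinarith [sq_nonneg β₂, mul_nonneg hεν k.cast_nonneg]
  choose m hm using fun k => exists_int_abs_le_one_add_abs hlam ha₂ (hdisc k)
  exact ⟨fun k => (ε * k, m k),
    fun k₁ k₂ h => by exact_mod_cast mul_left_cancel₀ hε (congrArg Prod.fst h), _, hm⟩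

theorem exists_mul_one_add_sq_le_max_abs_sub (lam K : ℝ) (hlam : lam ≠ 0) :
    ∃ c > 0, ∀ x z : ℝ, |z| ≤ K * (1 + |x|) → c * (1 + x ^ 2) ≤ max 1 |lam * x ^ 2 - z| := by
  have hlam' : 0 < |lam| := abs_pos.mpr hlam
  set R := max 1 (4 * K / |lam|)
  refine ⟨min (1 / (1 + R ^ 2)) (|lam| / 4), by positivity, fun x z hz => ?_⟩
  rcases le_or_gt |x| R with hxR | hRx
  · have hx2 : x ^ 2 ≤ R ^ 2 := by
      rw [← sq_abs]
      exact pow_le_pow_left₀ (abs_nonneg x) hxR 2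
    calc min (1 / (1 + R ^ 2)) (|lam| / 4) * (1 + x ^ 2) ≤ 1 / (1 + R ^ 2) * (1 + R ^ 2) := by
          gcongr
          exact min_le_left _ _
      _ = 1 := by field_simp
      _ ≤ _ := le_max_left _ _
  · have hx1 : 1 ≤ |x| := (le_max_left _ _).trans hRx.le
    have hKx : 4 * K ≤ |lam| * |x| := by
      rw [← div_le_iff₀' hlam']
      exact (le_max_right _ _).trans hRx.le
    have hK : 0 ≤ K := nonneg_of_mul_nonneg_left ((abs_nonneg z).trans hz) (by positivity)
    calc min (1 / (1 + R ^ 2)) (|lam| / 4) * (1 + x ^ 2) ≤ |lam| / 4 * (1 + x ^ 2) := by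
          gcongr
          exact min_le_right _ _
      _ ≤ |lam * x ^ 2| - |z| := by
          rw [abs_mul, abs_of_nonneg (sq_nonneg x), ← sq_abs x]
          nlinarith
      _ ≤ |lam * x ^ 2 - z| := abs_sub_abs_le_abs_sub _ _
      _ ≤ _ := le_max_right _ _

theorem exists_div_sqrt_le (lam K : ℝ) (hlam : lam ≠ 0) :
    ∃ C, ∀ x z : ℝ, |z| ≤ K * (1 + |x|) →
      (3 + x ^ 2 + (lam * x) ^ 2 + z ^ 2) /
        √(3 + x ^ 2 + (lam * x) ^ 2 + (x * (lam * x) - z) ^ 2) ≤ C := by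
  obtain ⟨c, hc, hden⟩ := exists_mul_one_add_sq_le_max_abs_sub lam K hlam
  refine ⟨(3 + lam ^ 2 + 2 * K ^ 2) / c, fun x z hz => ?_⟩
  have hz2 : z ^ 2 ≤ 2 * K ^ 2 * (1 + x ^ 2) := by
    calc z ^ 2 = |z| ^ 2 := (sq_abs z).symm
      _ ≤ (K * (1 + |x|)) ^ 2 := pow_le_pow_left₀ (abs_nonneg z) hz 2
      _ ≤ 2 * K ^ 2 * (1 + x ^ 2) := by nlinarith [sq_nonneg (1 - |x|), sq_abs x]
  have hsqrt : max 1 |lam * x ^ 2 - z| ≤ √(3 + x ^ 2 + (lam * x) ^ 2 + (x * (lam * x) - z) ^ 2) :=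
    max_le (Real.one_le_sqrt.mpr (by nlinarith [sq_nonneg x, sq_nonneg (lam * x)]))
      (Real.abs_le_sqrt (by nlinarith [sq_nonneg x, sq_nonneg (lam * x)]))
  have hpos : 0 < c * (1 + x ^ 2) := by positivity
  rw [div_le_iff₀ (hpos.trans_le ((hden x z hz).trans hsqrt))]
  calc 3 + x ^ 2 + (lam * x) ^ 2 + z ^ 2 ≤ (3 + lam ^ 2 + 2 * K ^ 2) / c * (c * (1 + x ^ 2)) := by
        rw [show (3 + lam ^ 2 + 2 * K ^ 2) / c * (c * (1 + x ^ 2)) =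
          (3 + lam ^ 2 + 2 * K ^ 2) * (1 + x ^ 2) by field_simp]
        nlinarith [sq_nonneg x, sq_nonneg (lam * x)]
    _ ≤ _ := by gcongr; exact (hden x z hz).trans hsqrt

/-- If the homomorphism ℤ² → SL(3,ℝ), (n,m) ↦ AⁿBᵐ, with A, B commuting upper
unitriangular matrices, is regular, then a₁c₂ = a₂c₁ = 0 (Claim 2). -/
theorem regular_unipotent_Z2_offdiag_vanish
    (a₁ b₁ c₁ a₂ b₂ c₂ : ℝ)
    (A B : Matrix.SpecialLinearGroup (Fin 3) ℝ)
    (hA : (A : Matrix (Fin 3) (Fin 3) ℝ) = !![1, a₁, b₁; 0, 1, c₁; 0, 0, 1])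
    (hB : (B : Matrix (Fin 3) (Fin 3) ℝ) = !![1, a₂, b₂; 0, 1, c₂; 0, 0, 1])
    (hcomm : A * B = B * A)
    (hreg : ∀ γ : ℕ → ℤ × ℤ, Function.Injective γ →
      IsRegularSeq fun k => A ^ (γ k).1 * B ^ (γ k).2) :
    a₁ * c₂ = 0 ∧ a₂ * c₁ = 0 := by
  change _ = unitriMatrix a₁ c₁ b₁ at hA
  change _ = unitriMatrix a₂ c₂ b₂ at hB
  have hac : a₁ * c₂ = a₂ * c₁ := by
    have h : ((A * B : SpecialLinearGroup (Fin 3) ℝ) : Matrix (Fin 3) (Fin 3) ℝ) = ↑(B * A) := by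
      rw [hcomm]
    rw [Matrix.SpecialLinearGroup.coe_mul, Matrix.SpecialLinearGroup.coe_mul, hA, hB] at h
    exact unitriMatrix_mul_comm_iff.mp h
  suffices a₁ * c₂ = 0 from ⟨this, hac ▸ this⟩
  by_contra hne
  obtain ⟨ha₁, -⟩ := mul_ne_zero_iff.mp hne
  obtain ⟨ha₂, -⟩ := mul_ne_zero_iff.mp (hac ▸ hne)
  obtain ⟨lam, rfl, rfl⟩ : ∃ lam, c₁ = lam * a₁ ∧ c₂ = lam * a₂ :=
    ⟨c₁ / a₁, by field_simp, by field_simp; linarith⟩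
  have hlam : lam ≠ 0 := by rintro rfl; simp at hne
  obtain ⟨γ, hγ, K, hK⟩ := exists_injective_abs_le_one_add_abs (a₁ := a₁)
    (β₁ := b₁ - lam * a₁ ^ 2 / 2) (β₂ := b₂ - lam * a₂ ^ 2 / 2) hlam ha₂
  obtain ⟨C, hC⟩ := exists_div_sqrt_le lam K hlam
  obtain ⟨k, hk⟩ := ((hreg γ hγ).eventually_gt_atTop C).exists
  rw [frobNorm_sq_div_frobNorm_inv
    (Matrix.SpecialLinearGroup.coe_zpow_mul_zpow_eq_unitriMatrix hA hB _ _)] at hk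
  exact (hk.trans_le (hC _ _ (hK k))).false
end

section
/- Let d ≥ 2 and for v ∈ ℝ^{d−1} let u(v) ∈ SL(d,ℝ) be the matrix whose diagonal entries equal 1, whose entries in the last column above the diagonal are u(v)_{i,d} = v_i for 1 ≤ i ≤ d−1, and whose remaining entries are 0 (these matrices form the unipotent radical of the stabilizer in SL(d,ℝ) of the hyperplane spanned by e₁,…,e_{d−1}). Then for every sequence (v_n) in ℝ^{d−1} with ‖v_n‖ → ∞, the sequence g_n = u(v_n) is P-regular for P the stabilizer of a line in ℝ^d: ‖g_n‖ → ∞, and every matrix L that arises as the limit of a convergent subsequence of (g_n/‖g_n‖) has rank 1. In particular, every sequence of pairwise distinct elements of a lattice in this unipotent radical is P-regular. -/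
/-!
Off its last column `u(v)` agrees with the identity matrix, and `‖u(v)‖ ≥ ‖v‖ → ∞`, so after
normalisation every entry outside the last column tends to `0`. A limit of the normalised
sequence is therefore supported on one column and has Frobenius norm `1`, hence rank `1`.
For a lattice, an injective sequence leaves every compact set because the lattice is discrete.
-/

open Filter

/-- Euclidean norm of a vector in ℝⁿ. -/
noncomputable def euclNorm {n : ℕ} (v : Fin n → ℝ) : ℝ :=
  Real.sqrt (∑ i, (v i) ^ 2)

/-- Frobenius (entrywise ℓ²) norm of a d×d real matrix. -/
noncomputable def frobNormD {d : ℕ} (g : Matrix (Fin d) (Fin d) ℝ) : ℝ :=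
  Real.sqrt (∑ i, ∑ j, (g i j) ^ 2)

/-- The unipotent matrix with 1's on the diagonal and the vector `v` filling the
entries of the last column above the diagonal; these matrices form the unipotent
radical of the stabilizer in SL(d,ℝ) of the hyperplane spanned by e₁, …, e_{d-1}. -/
def lastColUnip (d : ℕ) (v : Fin (d - 1) → ℝ) : Matrix (Fin d) (Fin d) ℝ :=
  fun i j => if i = j then 1
    else if h : (j : ℕ) = d - 1 ∧ (i : ℕ) < d - 1 then v ⟨i, h.2⟩ else 0

/-- A sequence of matrices is P-regular (P the stabilizer of a line in ℝ^d) iff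
its norms tend to infinity and every limit of a convergent subsequence of the
normalized sequence has rank 1. -/
def IsPRegularSeq {d : ℕ} (g : ℕ → Matrix (Fin d) (Fin d) ℝ) : Prop :=
  Tendsto (fun n => frobNormD (g n)) atTop atTop ∧
  ∀ L : Matrix (Fin d) (Fin d) ℝ,
    (∃ φ : ℕ → ℕ, StrictMono φ ∧
      Tendsto (fun k => (frobNormD (g (φ k)))⁻¹ • g (φ k)) atTop (nhds L)) →
    L.rank = 1

open Topology

theorem Matrix.rank_eq_one_of_apply_eq_zero_of_ne {K m n : Type*} [Field K] [Fintype n]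
    [DecidableEq n] {A : Matrix m n K} (j₀ : n) (hA : ∀ i, ∀ j ≠ j₀, A i j = 0) (h0 : A ≠ 0) :
    A.rank = 1 := by
  have hvec : A = Matrix.vecMulVec (fun i => A i j₀) (Pi.single j₀ 1) := by
    ext i j
    rcases eq_or_ne j j₀ with rfl | hj
    · simp [Matrix.vecMulVec_apply]
    · simp [Matrix.vecMulVec_apply, hA i j hj, hj]
  refine le_antisymm (hvec ▸ Matrix.rank_vecMulVec_le _ _) (Nat.one_le_iff_ne_zero.2 ?_)
  intro hrank
  have hrange : LinearMap.range A.mulVecLin = ⊥ := Submodule.finrank_eq_zero.1 hrank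
  rw [LinearMap.range_eq_bot, ← Matrix.toLin'_apply', ← Matrix.toLin'.map_zero] at hrange
  exact h0 (Matrix.toLin'.injective hrange)

section FrobeniusNorm

variable {d : ℕ}

theorem frobNormD_smul (c : ℝ) (A : Matrix (Fin d) (Fin d) ℝ) :
    frobNormD (c • A) = |c| * frobNormD A := by
  simp only [frobNormD, Matrix.smul_apply, smul_eq_mul, mul_pow, ← Finset.mul_sum]
  rw [Real.sqrt_mul (sq_nonneg c), Real.sqrt_sq_eq_abs]

theorem continuous_frobNormD : Continuous (frobNormD : Matrix (Fin d) (Fin d) ℝ → ℝ) := by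
  unfold frobNormD
  fun_prop

variable {g : ℕ → Matrix (Fin d) (Fin d) ℝ} {L : Matrix (Fin d) (Fin d) ℝ}

theorem frobNormD_eq_one_of_tendsto (hg : Tendsto (fun n => frobNormD (g n)) atTop atTop)
    (hL : Tendsto (fun n => (frobNormD (g n))⁻¹ • g n) atTop (𝓝 L)) : frobNormD L = 1 := by
  have hnormalized : ∀ᶠ n in atTop, frobNormD ((frobNormD (g n))⁻¹ • g n) = 1 :=
    (hg.eventually_gt_atTop 0).mono fun n hn => by
      rw [frobNormD_smul, abs_inv, abs_of_pos hn, inv_mul_cancel₀ hn.ne']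
  exact tendsto_nhds_unique ((continuous_frobNormD.tendsto L).comp hL)
    (tendsto_const_nhds.congr' (hnormalized.mono fun _ h => h.symm))

theorem apply_eq_zero_of_tendsto {i j : Fin d} {c : ℝ} (hc : ∀ n, g n i j = c)
    (hg : Tendsto (fun n => frobNormD (g n)) atTop atTop)
    (hL : Tendsto (fun n => (frobNormD (g n))⁻¹ • g n) atTop (𝓝 L)) : L i j = 0 := by
  have hentry : Tendsto (fun n => (frobNormD (g n))⁻¹ * c) atTop (𝓝 (L i j)) := by
    simpa [hc] using tendsto_pi_nhds.1 (tendsto_pi_nhds.1 hL i) j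
  exact tendsto_nhds_unique hentry (by simpa using (tendsto_inv_atTop_zero.comp hg).mul_const c)

theorem isPRegularSeq_of_apply_eq_of_ne (j₀ : Fin d)
    (hg : Tendsto (fun n => frobNormD (g n)) atTop atTop)
    (hconst : ∀ i, ∀ j ≠ j₀, ∀ n, g n i j = g 0 i j) : IsPRegularSeq g := by
  refine ⟨hg, fun L ⟨φ, hφ, hL⟩ => ?_⟩
  have hgφ : Tendsto (fun k => frobNormD (g (φ k))) atTop atTop := hg.comp hφ.tendsto_atTop
  refine Matrix.rank_eq_one_of_apply_eq_zero_of_ne j₀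
    (fun i j hj => apply_eq_zero_of_tendsto (fun k => hconst i j hj (φ k)) hgφ hL) ?_
  rintro rfl
  simpa [frobNormD] using frobNormD_eq_one_of_tendsto hgφ hL

end FrobeniusNorm

section LastColUnip

variable {m : ℕ}

theorem lastColUnip_apply_castSucc_last (v : Fin m → ℝ) (i : Fin m) :
    lastColUnip (m + 1) v i.castSucc (Fin.last m) = v i := by
  simp [lastColUnip, (Fin.castSucc_lt_last i).ne]

theorem lastColUnip_apply_of_ne_last (v : Fin m → ℝ) (i : Fin (m + 1)) {j : Fin (m + 1)}
    (hj : j ≠ Fin.last m) : lastColUnip (m + 1) v i j = (1 : Matrix (Fin (m + 1)) _ ℝ) i j := by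
  have hj' : (j : ℕ) ≠ m := fun h => hj (Fin.ext h)
  simp [lastColUnip, Matrix.one_apply, hj']

theorem euclNorm_le_frobNormD_lastColUnip (v : Fin m → ℝ) :
    euclNorm v ≤ frobNormD (lastColUnip (m + 1) v) := by
  unfold euclNorm frobNormD
  gcongr
  calc ∑ i, v i ^ 2 = ∑ i : Fin m, lastColUnip (m + 1) v i.castSucc (Fin.last m) ^ 2 := by
        simp only [lastColUnip_apply_castSucc_last]
    _ ≤ ∑ i, lastColUnip (m + 1) v i (Fin.last m) ^ 2 := by
        rw [Fin.sum_univ_castSucc]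
        exact le_add_of_nonneg_right (sq_nonneg _)
    _ ≤ ∑ i, ∑ j, lastColUnip (m + 1) v i j ^ 2 :=
        Finset.sum_le_sum fun i _ =>
          Finset.single_le_sum (fun j _ => sq_nonneg (lastColUnip (m + 1) v i j))
            (Finset.mem_univ _)

theorem isPRegularSeq_lastColUnip {v : ℕ → Fin m → ℝ}
    (hv : Tendsto (fun n => euclNorm (v n)) atTop atTop) :
    IsPRegularSeq fun n => lastColUnip (m + 1) (v n) :=
  isPRegularSeq_of_apply_eq_of_ne (Fin.last m)
    (tendsto_atTop_mono (fun n => euclNorm_le_frobNormD_lastColUnip (v n)) hv)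
    fun i _ hj n => by rw [lastColUnip_apply_of_ne_last _ _ hj, lastColUnip_apply_of_ne_last _ _ hj]

end LastColUnip

theorem AddSubgroup.tendsto_norm_of_injective {E : Type*} [NormedAddCommGroup E] [ProperSpace E]
    (H : AddSubgroup E) [DiscreteTopology H] {γ : ℕ → H} (hγ : Function.Injective γ) :
    Tendsto (fun n => ‖(γ n : E)‖) atTop atTop := by
  have hcocompact : Tendsto ((↑) : H → E) cofinite (cocompact E) :=
    H.tendsto_coe_cofinite_of_discrete (isDiscrete_iff_discreteTopology.2 ‹_›)
  rw [← Nat.cofinite_eq_atTop]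
  exact tendsto_norm_cocompact_atTop.comp (hcocompact.comp hγ.tendsto_cofinite)

theorem norm_le_euclNorm {m : ℕ} (v : Fin m → ℝ) : ‖v‖ ≤ euclNorm v := by
  refine (pi_norm_le_iff_of_nonneg (Real.sqrt_nonneg _)).2 fun i => ?_
  rw [Real.norm_eq_abs, ← Real.sqrt_sq_eq_abs]
  exact Real.sqrt_le_sqrt (Finset.single_le_sum (fun i _ => sq_nonneg (v i)) (Finset.mem_univ i))

theorem lastColUnip_regular_general (d : ℕ) :
    (∀ v : ℕ → (Fin (d - 1) → ℝ),
      Tendsto (fun n => euclNorm (v n)) atTop atTop →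
      IsPRegularSeq fun n => lastColUnip d (v n)) ∧
    (∀ (Λ : Submodule ℤ (Fin (d - 1) → ℝ)) [DiscreteTopology Λ] [IsZLattice ℝ Λ],
      ∀ γ : ℕ → Λ, Function.Injective γ →
        IsPRegularSeq fun n => lastColUnip d (γ n : Fin (d - 1) → ℝ)) := by
  have hregular : ∀ v : ℕ → (Fin (d - 1) → ℝ), Tendsto (fun n => euclNorm (v n)) atTop atTop →
      IsPRegularSeq fun n => lastColUnip d (v n) := by
    rcases d with _ | m
    · -- `Fin (0 - 1) → ℝ` is the zero space, so `euclNorm (v n) = 0` cannot tend to infinity.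
      intro v hv
      simp [euclNorm, not_tendsto_const_atTop] at hv
    · exact fun v => isPRegularSeq_lastColUnip
  refine ⟨hregular, fun Λ _ _ γ hγ => hregular _ ?_⟩
  exact tendsto_atTop_mono (fun n => norm_le_euclNorm _)
    (Λ.toAddSubgroup.tendsto_norm_of_injective hγ)

/-- Claim 3: any sequence in the unipotent radical of the stabilizer of a
hyperplane whose parameter vectors go to infinity is P-regular, for P the
stabilizer of a line.  In particular, every sequence of pairwise distinct
elements of a lattice in this unipotent radical is P-regular. -/
theorem lastColUnip_regular (d : ℕ) (hd : 2 ≤ d) :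
    (∀ v : ℕ → (Fin (d - 1) → ℝ),
      Tendsto (fun n => euclNorm (v n)) atTop atTop →
      IsPRegularSeq fun n => lastColUnip d (v n)) ∧
    (∀ (Λ : Submodule ℤ (Fin (d - 1) → ℝ)) [DiscreteTopology Λ] [IsZLattice ℝ Λ],
      ∀ γ : ℕ → Λ, Function.Injective γ →
        IsPRegularSeq fun n => lastColUnip d (γ n : Fin (d - 1) → ℝ)) :=
  lastColUnip_regular_general d
end

section
/- (Ping-pong lemma.) Let G be a first-countable topological group acting continuously on a topological space F, and let Γ₁, Γ₂ be infinite subgroups of G. Suppose there are nonempty, closed, disjoint subsets C₁, C₂ ⊆ F such that γ·C₂ ⊆ C₁ for every γ ∈ Γ₁ \ {1} and γ·C₁ ⊆ C₂ for every γ ∈ Γ₂ \ {1}. Then: (a) the canonical homomorphism from the free product Γ₁ ∗ Γ₂ to G induced by the two inclusions is injective; and (b) the subgroup Γ₁ ⊔ Γ₂ of G generated by Γ₁ and Γ₂ is discrete, i.e., carries the discrete topology as a subspace of G. -/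
/-!
A nontrivial reduced word of `Γ₁ ∗ Γ₂` can be conjugated, by `1` or by one of two fixed
nontrivial elements `a₁ ≠ a₂` of `Γ₁`, into a reduced word beginning and ending with a letter
of `Γ₁`, and by ping-pong such a word maps `C₂` into `C₁`. Fix `x ∈ C₂`, so `x ∉ C₁`. Then the
image of a nontrivial word is never `1`, and `(Γ₁ ⊔ Γ₂) \ {1}` lies in the closed set
`⋃ k, {g | (k * g * k⁻¹) • x ∈ C₁}` (over the three conjugators `k`), which misses `1`.
-/

open Pointwise

namespace Monoid.CoprodI

variable {ι : Type*} {H : ι → Type*} [∀ i, Group (H i)]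

namespace NeWord

theorem exists_prod_eq_conj_of_mul_head_ne_one {t j : ι} (w : NeWord H t j) (hj : j ≠ t)
    {a : H t} (ha : a ≠ 1) (hhead : a * w.head ≠ 1) :
    ∃ w' : NeWord H t t, w'.prod = of a * w.prod * (of a)⁻¹ :=
  ⟨(w.mulHead a hhead).append hj (singleton a⁻¹ (inv_ne_one.mpr ha)), by simp [mul_assoc]⟩

theorem exists_prod_eq_conj_of_ne_last {i t : ι} (w : NeWord H i t) (hi : i ≠ t) {a : H t}
    (ha : a ≠ 1) (hlast : a ≠ w.last) :
    ∃ w' : NeWord H t t, w'.prod = of a * w.prod * (of a)⁻¹ := by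
  obtain ⟨w', hw'⟩ := w.inv.exists_prod_eq_conj_of_mul_head_ne_one hi ha
    (by rwa [inv_head, ← div_eq_mul_inv, div_ne_one])
  exact ⟨w'.inv, by simp [hw', mul_assoc]⟩

theorem exists_prod_eq_conj_of_ne_of_ne {i j t : ι} (w : NeWord H i j) (hi : i ≠ t) (hj : j ≠ t)
    {a : H t} (ha : a ≠ 1) :
    ∃ w' : NeWord H t t, w'.prod = of a * w.prod * (of a)⁻¹ :=
  ⟨(singleton a ha).append hi.symm (w.append hj (singleton a⁻¹ (inv_ne_one.mpr ha))),
    by simp [mul_assoc]⟩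

theorem exists_prod_eq_conj {t : ι} {a₁ a₂ : H t} (h₁ : a₁ ≠ 1) (h₂ : a₂ ≠ 1) (h₁₂ : a₁ ≠ a₂)
    {i j : ι} (w : NeWord H i j) :
    ∃ k ∈ ({1, a₁, a₂} : Set (H t)), ∃ w' : NeWord H t t, w'.prod = of k * w.prod * (of k)⁻¹ := by
  have avoid : ∀ c : H t, ∃ a ∈ ({1, a₁, a₂} : Set (H t)), a ≠ 1 ∧ a ≠ c := fun c => by
    by_cases hc : a₁ = c
    · exact ⟨a₂, by simp, h₂, hc ▸ h₁₂.symm⟩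
    · exact ⟨a₁, by simp, h₁, hc⟩
  by_cases hi : i = t <;> by_cases hj : j = t
  · subst hi hj
    exact ⟨1, by simp, w, by simp⟩
  · subst hi
    obtain ⟨a, ha, ha1, hac⟩ := avoid w.head⁻¹
    exact ⟨a, ha, w.exists_prod_eq_conj_of_mul_head_ne_one hj ha1
      (by rwa [← div_inv_eq_mul, div_ne_one])⟩
  · subst hj
    obtain ⟨a, ha, ha1, hac⟩ := avoid w.last
    exact ⟨a, ha, w.exists_prod_eq_conj_of_ne_last hi ha1 hac⟩
  · exact ⟨a₁, by simp, w.exists_prod_eq_conj_of_ne_of_ne hi hj h₁⟩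

end NeWord

theorem exists_neWord_prod_eq {m : CoprodI H} (hm : m ≠ 1) :
    ∃ (i j : ι) (w : NeWord H i j), w.prod = m := by
  classical
  have hw : Word.equiv m ≠ Word.empty := fun h => hm <| by
    rw [← Word.equiv.symm_apply_apply m, h]; rfl
  obtain ⟨i, j, w, hw⟩ := NeWord.of_word _ hw
  exact ⟨i, j, w, by rw [NeWord.prod, hw]; exact Word.equiv.symm_apply_apply m⟩

theorem exists_conj_lift_smul_subset {G α : Type*} [Group G] [MulAction G α] (f : ∀ i, H i →* G)
    {X : ι → Set α} (hpp : Pairwise fun i j => ∀ h : H i, h ≠ 1 → f i h • X j ⊆ X i)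
    {s t : ι} (hst : s ≠ t) {a₁ a₂ : H t} (h₁ : a₁ ≠ 1) (h₂ : a₂ ≠ 1) (h₁₂ : a₁ ≠ a₂)
    {m : CoprodI H} (hm : m ≠ 1) :
    ∃ k ∈ ({1, a₁, a₂} : Set (H t)), (f t k * lift f m * (f t k)⁻¹) • X s ⊆ X t := by
  obtain ⟨i, j, w, rfl⟩ := exists_neWord_prod_eq hm
  obtain ⟨k, hk, w', hw'⟩ := w.exists_prod_eq_conj h₁ h₂ h₁₂
  refine ⟨k, hk, ?_⟩
  simpa [hw'] using lift_word_ping_pong f X hpp w' hst.symm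

end Monoid.CoprodI

namespace Monoid.Coprod

open scoped Monoid.Coprod

variable {H : Bool → Type*} [∀ b, Monoid (H b)]

def toCoprodI : H true ∗ H false →* CoprodI H :=
  lift CoprodI.of CoprodI.of

def ofCoprodI : CoprodI H →* H true ∗ H false :=
  CoprodI.lift fun b => Bool.rec (motive := fun b => H b →* H true ∗ H false) inr inl b

theorem toCoprodI_injective : Function.Injective (toCoprodI (H := H)) := by
  have h : ofCoprodI.comp toCoprodI = MonoidHom.id (H true ∗ H false) :=
    hom_ext (by ext; simp [toCoprodI, ofCoprodI]) (by ext; simp [toCoprodI, ofCoprodI])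
  exact Function.LeftInverse.injective (g := ofCoprodI) (DFunLike.congr_fun h)

theorem coprodI_lift_comp_toCoprodI {P : Type*} [Monoid P] (f : ∀ b, H b →* P) :
    (CoprodI.lift f).comp toCoprodI = lift (f true) (f false) :=
  hom_ext (by ext; simp [toCoprodI]) (by ext; simp [toCoprodI])

end Monoid.Coprod

namespace Subgroup

open Monoid

variable {G α : Type*} [Group G] [MulAction G α]

theorem exists_conj_coprodLift_smul_subset {Γ₁ Γ₂ : Subgroup G} {C₁ C₂ : Set α}
    (hping : ∀ γ ∈ Γ₁, γ ≠ 1 → γ • C₂ ⊆ C₁) (hpong : ∀ γ ∈ Γ₂, γ ≠ 1 → γ • C₁ ⊆ C₂)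
    {a₁ a₂ : Γ₁} (h₁ : a₁ ≠ 1) (h₂ : a₂ ≠ 1) (h₁₂ : a₁ ≠ a₂) {m : Coprod Γ₁ Γ₂} (hm : m ≠ 1) :
    ∃ k ∈ ({1, a₁, a₂} : Set Γ₁),
      ((k : G) * Coprod.lift Γ₁.subtype Γ₂.subtype m * (k : G)⁻¹) • C₂ ⊆ C₁ := by
  let K : Bool → Subgroup G := fun b => cond b Γ₁ Γ₂
  have hpp : Pairwise fun i j => ∀ h : K i, h ≠ 1 →
      (K i).subtype h • cond j C₁ C₂ ⊆ cond i C₁ C₂ := by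
    rintro (_ | _) (_ | _) hij ⟨h, hK⟩ hh
    · exact (hij rfl).elim
    · exact hpong h hK (by simpa using hh)
    · exact hping h hK (by simpa using hh)
    · exact (hij rfl).elim
  have hm' : Coprod.toCoprodI (H := fun b => K b) m ≠ 1 :=
    (map_ne_one_iff _ Coprod.toCoprodI_injective).mpr hm
  have := CoprodI.exists_conj_lift_smul_subset _ hpp Bool.false_ne_true h₁ h₂ h₁₂ hm'
  rwa [← MonoidHom.comp_apply, Coprod.coprodI_lift_comp_toCoprodI] at this

theorem discreteTopology_of_conj_smul_mem [TopologicalSpace G] [IsTopologicalGroup G]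
    [TopologicalSpace α] [ContinuousSMul G α] {Γ : Subgroup G} {S : Set G} (hS : S.Finite)
    {C : Set α} (hC : IsClosed C) {x : α} (hx : x ∉ C)
    (h : ∀ g ∈ Γ, g ≠ 1 → ∃ k ∈ S, (k * g * k⁻¹) • x ∈ C) :
    DiscreteTopology Γ := by
  set D := ⋃ k ∈ S, (fun g => (k * g * k⁻¹) • x) ⁻¹' C
  have hD : IsClosed D := hS.isClosed_biUnion fun k _ => hC.preimage (by fun_prop)
  refine discreteTopology_of_isOpen_singleton_one ?_
  convert hD.isOpen_compl.preimage continuous_subtype_val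
  ext ⟨g, hg⟩
  simp only [Set.mem_singleton_iff, Set.mem_preimage, Set.mem_compl_iff, D, Set.mem_iUnion,
    not_exists, Subgroup.mk_eq_one]
  constructor
  · rintro rfl k -
    simpa using hx
  · intro hgD
    by_contra hg1
    obtain ⟨k, hk, hkg⟩ := h g hg hg1
    exact hgD k hk hkg

end Subgroup

theorem ping_pong_general {G : Type*} [Group G] [TopologicalSpace G] [IsTopologicalGroup G]
    {F : Type*} [TopologicalSpace F] [MulAction G F] [ContinuousSMul G F]
    (Γ₁ Γ₂ : Subgroup G) (h1 : Infinite Γ₁)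
    (C₁ C₂ : Set F) (hne₂ : C₂.Nonempty)
    (hcl₁ : IsClosed C₁) (hdisj : Disjoint C₁ C₂)
    (hping : ∀ γ ∈ Γ₁, γ ≠ 1 → γ • C₂ ⊆ C₁)
    (hpong : ∀ γ ∈ Γ₂, γ ≠ 1 → γ • C₁ ⊆ C₂) :
    Function.Injective
        (Monoid.Coprod.lift Γ₁.subtype Γ₂.subtype :
          Monoid.Coprod Γ₁ Γ₂ →* G) ∧
      DiscreteTopology (Γ₁ ⊔ Γ₂ : Subgroup G) := by
  classical
  obtain ⟨a₁, h₁⟩ := exists_ne (1 : Γ₁)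
  obtain ⟨a₂, h₂, h₂₁⟩ : ∃ a₂ : Γ₁, a₂ ≠ 1 ∧ a₂ ≠ a₁ := by
    simpa using Infinite.exists_notMem_finset ({1, a₁} : Finset Γ₁)
  obtain ⟨x, hx⟩ := hne₂
  have hxC : x ∉ C₁ := hdisj.notMem_of_mem_right hx
  set S : Set G := (↑) '' ({1, a₁, a₂} : Set Γ₁)
  have hconj : ∀ m ≠ 1, ∃ k ∈ S,
      (k * Monoid.Coprod.lift Γ₁.subtype Γ₂.subtype m * k⁻¹) • x ∈ C₁ := fun m hm => by
    obtain ⟨k, hk, hkC⟩ :=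
      Subgroup.exists_conj_coprodLift_smul_subset hping hpong h₁ h₂ h₂₁.symm hm
    exact ⟨k, Set.mem_image_of_mem _ hk, hkC (Set.smul_mem_smul_set hx)⟩
  refine ⟨(injective_iff_map_eq_one _).mpr fun m hm1 => ?_, ?_⟩
  · by_contra hm
    obtain ⟨k, -, hk⟩ := hconj m hm
    exact hxC (by simpa [hm1] using hk)
  · refine Subgroup.discreteTopology_of_conj_smul_mem (Set.toFinite S) hcl₁ hxC
      fun g hg hg1 => ?_
    obtain ⟨m, rfl⟩ : g ∈ (Monoid.Coprod.lift Γ₁.subtype Γ₂.subtype).range := by simpa using hg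
    exact hconj m fun hm => hg1 (by simp [hm])

/-- Ping-pong lemma (Lemma 4.1): if infinite subgroups Γ₁, Γ₂ of a first-countable
topological group acting continuously on a space F admit nonempty closed disjoint
subsets C₁, C₂ of F with γ·C₂ ⊆ C₁ for nontrivial γ ∈ Γ₁ and γ·C₁ ⊆ C₂ for
nontrivial γ ∈ Γ₂, then ⟨Γ₁, Γ₂⟩ is discrete and decomposes as Γ₁ ∗ Γ₂. -/
theorem ping_pong {G : Type*} [Group G] [TopologicalSpace G] [IsTopologicalGroup G]
    [FirstCountableTopology G]
    {F : Type*} [TopologicalSpace F] [MulAction G F] [ContinuousSMul G F]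
    (Γ₁ Γ₂ : Subgroup G) (h1 : Infinite Γ₁) (h2 : Infinite Γ₂)
    (C₁ C₂ : Set F) (hne₁ : C₁.Nonempty) (hne₂ : C₂.Nonempty)
    (hcl₁ : IsClosed C₁) (hcl₂ : IsClosed C₂) (hdisj : Disjoint C₁ C₂)
    (hping : ∀ γ ∈ Γ₁, γ ≠ 1 → γ • C₂ ⊆ C₁)
    (hpong : ∀ γ ∈ Γ₂, γ ≠ 1 → γ • C₁ ⊆ C₂) :
    Function.Injective
        (Monoid.Coprod.lift Γ₁.subtype Γ₂.subtype :
          Monoid.Coprod Γ₁ Γ₂ →* G) ∧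
      DiscreteTopology (Γ₁ ⊔ Γ₂ : Subgroup G) :=
  ping_pong_general Γ₁ Γ₂ h1 C₁ C₂ hne₂ hcl₁ hdisj hping hpong
end

section
/- Let A, B ∈ SL(3,ℝ) be commuting matrices such that the homomorphism ρ : ℤ² → SL(3,ℝ), ρ(n,m) = Aⁿ·Bᵐ, is injective and has discrete image, and suppose that ρ(ℤ²) is not contained in any minimal horospherical subgroup of SL(3,ℝ), i.e., there is no g ∈ SL(3,ℝ) with g·ρ(ℤ²)·g⁻¹ ⊆ U₁ or g·ρ(ℤ²)·g⁻¹ ⊆ U₂. Then the limit set of Γ = ρ(ℤ²) in the projective plane ℙ(ℝ³) — namely the set of one-dimensional subspaces of ℝ³ of the form range(L), where L ranges over all rank-one 3×3 real matrices that arise as limits of sequences (γ_n/‖γ_n‖) for sequences (γ_n) of pairwise distinct elements of Γ — contains at most 3 elements. -/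
open Filter

/-- Topology on SL(3,ℝ) induced from the space of matrices. -/
instance : TopologicalSpace (Matrix.SpecialLinearGroup (Fin 3) ℝ) :=
  TopologicalSpace.induced (fun g => (g : Matrix (Fin 3) (Fin 3) ℝ)) inferInstance

/-!
Every rank-one limit `L` of normalised elements of `ρ(ℤ²)` commutes with `A` and `B`, so its range
is a common eigenline of `A` and `B`. If `A` and `B` have no common eigenplane, distinct common
eigenlines carry distinct pairs of eigenvalues, hence are spanned by linearly independent vectors:
there are at most three of them. If `A` and `B` act by scalars `α`, `β` on a plane `P`, then
either `α = β = 1`, so `ρ(ℤ²)` fixes `P` pointwise and is conjugate into `U₂`, which is excluded;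
or `det = 1` forces a common eigenline `ℝu` complementary to `P`. Every element of `ρ(ℤ²)` is then
a scalar on `P` and on `ℝu`, so a rank-one limit vanishes on `P` and its range is `ℝu`.
-/

open Topology Submodule Function
open scoped Matrix

theorem Set.exists_subset_triple_of_encard_le_three {α : Type*} [Nonempty α] {S : Set α}
    (h : S.encard ≤ 3) : ∃ x y z : α, S ⊆ {x, y, z} := by
  obtain ⟨-, k, hk, hk3⟩ := Set.encard_le_coe_iff.mp h
  obtain ⟨a⟩ := ‹Nonempty α›
  interval_cases k
  · exact ⟨a, a, a, by simp [Set.encard_eq_zero.mp hk]⟩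
  · obtain ⟨x, rfl⟩ := Set.encard_eq_one.mp hk
    exact ⟨x, x, x, by simp⟩
  · obtain ⟨x, y, -, rfl⟩ := Set.encard_eq_two.mp hk
    exact ⟨x, y, y, by simp⟩
  · obtain ⟨x, y, z, -, -, -, rfl⟩ := Set.encard_eq_three.mp hk
    exact ⟨x, y, z, subset_rfl⟩

theorem Commute.of_tendsto {M ι : Type*} [Mul M] [TopologicalSpace M] [SeparatelyContinuousMul M]
    [T2Space M] {l : Filter ι} [l.NeBot] {a b : M} {f : ι → M} (hf : Tendsto f l (𝓝 b))
    (h : ∀ᶠ i in l, Commute a (f i)) : Commute a b :=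
  (Set.isClosed_centralizer {a}).mem_of_tendsto hf
    (h.mono fun _ hi _ hm => (Set.mem_singleton_iff.mp hm) ▸ hi.eq) a rfl

theorem exists_tendsto_of_tendsto_smul_right {𝕜 E ι : Type*} [NontriviallyNormedField 𝕜]
    [CompleteSpace 𝕜] [AddCommGroup E] [Module 𝕜 E] [TopologicalSpace E]
    [IsTopologicalAddGroup E] [ContinuousSMul 𝕜 E] [T2Space E] {l : Filter ι} [l.NeBot]
    {x y : E} (hx : x ≠ 0) {c : ι → 𝕜} (h : Tendsto (fun i => c i • x) l (𝓝 y)) :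
    ∃ a, Tendsto c l (𝓝 a) ∧ y = a • x := by
  have he := isClosedEmbedding_smul_left (𝕜 := 𝕜) hx
  obtain ⟨a, rfl⟩ : y ∈ Set.range fun a : 𝕜 => a • x :=
    he.isClosed_range.mem_of_tendsto h (Eventually.of_forall fun i => ⟨c i, rfl⟩)
  exact ⟨a, he.tendsto_nhds_iff.mpr h, rfl⟩

section LinearAlgebra

variable {K V : Type*} [Field K] [AddCommGroup V] [Module K V]

theorem LinearIndependent.encard_le_finrank [FiniteDimensional K V] {ι : Type*} {S : Set ι}
    {v : S → V}
    (h : LinearIndependent K v) : S.encard ≤ Module.finrank K V := by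
  have := h.finite_of_isNoetherian
  have := Fintype.ofFinite S
  rw [Set.encard_eq_coe_toFinset_card, Set.toFinset_card]
  exact_mod_cast h.fintype_card_le_finrank

theorem linearIndependent_pair_of_span_singleton_ne {x y : V} (hx : x ≠ 0) (hy : y ≠ 0)
    (h : span K {x} ≠ span K {y}) : LinearIndependent K ![x, y] := by
  refine linearIndependent_fin2.mpr ⟨hy, fun a hxy => h ?_⟩
  have ha : a ≠ 0 := by
    rintro rfl
    exact hx (by simpa using hxy.symm)
  simp only [Matrix.cons_val_one, Matrix.cons_val_zero] at hxy
  rw [← hxy, span_singleton_smul_eq (IsUnit.mk0 a ha)]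

theorem Module.Basis.toMatrix_eq_of_apply_eq_smul (b : Module.Basis (Fin 3) K V)
    {f : V →ₗ[K] V} {μ : K} (h₀ : f (b 0) = μ • b 0) (h₁ : f (b 1) = μ • b 1) :
    LinearMap.toMatrix b b f = !![μ, 0, b.repr (f (b 2)) 0; 0, μ, b.repr (f (b 2)) 1;
      0, 0, b.repr (f (b 2)) 2] := by
  ext i j
  fin_cases i <;> fin_cases j <;> simp [LinearMap.toMatrix_apply, h₀, h₁]

theorem Module.Basis.det_eq_of_apply_eq_smul (b : Module.Basis (Fin 3) K V) {f : V →ₗ[K] V}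
    {μ : K} (h₀ : f (b 0) = μ • b 0) (h₁ : f (b 1) = μ • b 1) :
    LinearMap.det f = μ * μ * b.repr (f (b 2)) 2 := by
  rw [← LinearMap.det_toMatrix b, b.toMatrix_eq_of_apply_eq_smul h₀ h₁, Matrix.det_fin_three]
  simp

end LinearAlgebra

namespace Matrix

variable {K n : Type*} [Field K] [Fintype n]

theorem exists_mulVec_eq_smul_of_commute_of_ne {A B : Matrix n n K} (hAB : Commute A B)
    {u v₁ v₂ : n → K} (hv : LinearIndependent K ![v₁, v₂]) (hspan : span K {u, v₁, v₂} = ⊤)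
    {α γ : K} (hγ : γ ≠ α) (hA₁ : A *ᵥ v₁ = α • v₁) (hA₂ : A *ᵥ v₂ = α • v₂)
    (hAu : A *ᵥ u = γ • u) : ∃ δ : K, B *ᵥ u = δ • u := by
  obtain ⟨δ, _, hz, hBu⟩ := mem_span_insert.mp (hspan ▸ mem_top : B *ᵥ u ∈ span K {u, v₁, v₂})
  obtain ⟨c₁, c₂, rfl⟩ := mem_span_pair.mp hz
  have hABu : A *ᵥ (B *ᵥ u) = γ • (B *ᵥ u) := by
    rw [mulVec_mulVec, hAB.eq, ← mulVec_mulVec, hAu, mulVec_smul]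
  rw [hBu] at hABu
  simp only [mulVec_add, mulVec_smul, hAu, hA₁, hA₂] at hABu
  have hzero : (c₁ * (α - γ)) • v₁ + (c₂ * (α - γ)) • v₂ = 0 := by
    rw [← sub_eq_zero.mpr hABu]
    module
  obtain ⟨h₁, h₂⟩ := LinearIndependent.pair_iff.mp hv _ _ hzero
  rw [mul_eq_zero, or_iff_left (sub_ne_zero.mpr hγ.symm)] at h₁ h₂
  exact ⟨δ, by rw [hBu, h₁, h₂]; simp⟩

theorem tendsto_mulVec {ι : Type*} {l : Filter ι} {g : ι → Matrix n n ℝ}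
    {L : Matrix n n ℝ} (hg : Tendsto g l (𝓝 L)) (v : n → ℝ) :
    Tendsto (fun i => g i *ᵥ v) l (𝓝 (L *ᵥ v)) :=
  ((continuous_id.matrix_mulVec continuous_const).tendsto L).comp hg

variable [DecidableEq n]

theorem exists_range_toLin'_eq_span_singleton {L : Matrix n n K} (h : L.rank = 1) :
    ∃ v ≠ 0, LinearMap.range (toLin' L) = span K {v} := by
  have hfin : Module.finrank K (LinearMap.range (toLin' L)) = 1 := h
  obtain ⟨v, hv, hv0⟩ := (Submodule.ne_bot_iff (LinearMap.range (toLin' L))).mp fun hbot => by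
    rw [hbot, finrank_bot] at hfin; exact zero_ne_one hfin
  refine ⟨v, hv0, (eq_of_le_of_finrank_le ((span_singleton_le_iff_mem _ _).mpr hv) ?_).symm⟩
  rw [hfin, finrank_span_singleton hv0]

theorem exists_mulVec_eq_smul_of_commute {C L : Matrix n n K} (hCL : Commute C L)
    {v : n → K} (hv : LinearMap.range (toLin' L) = span K {v}) : ∃ α : K, C *ᵥ v = α • v := by
  obtain ⟨x, hx⟩ : v ∈ LinearMap.range (toLin' L) := hv ▸ mem_span_singleton_self v
  have hCv : C *ᵥ v ∈ LinearMap.range (toLin' L) :=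
    ⟨C *ᵥ x, by rw [toLin'_apply, ← hx, toLin'_apply, mulVec_mulVec, mulVec_mulVec, hCL.eq]⟩
  obtain ⟨α, hα⟩ := mem_span_singleton.mp (hv ▸ hCv)
  exact ⟨α, hα.symm⟩

theorem eq_zero_of_mulVec_eq_smul_of_rank_le_one {L : Matrix n n K} (hL : L.rank ≤ 1)
    {v₁ v₂ : n → K} (hv : LinearIndependent K ![v₁, v₂]) {a : K} (h₁ : L *ᵥ v₁ = a • v₁)
    (h₂ : L *ᵥ v₂ = a • v₂) : a = 0 := by
  by_contra ha
  have hmem : ∀ v, L *ᵥ v = a • v → v ∈ LinearMap.range (toLin' L) := fun v hv =>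
    ⟨a⁻¹ • v, by rw [toLin'_apply, mulVec_smul, hv, inv_smul_smul₀ ha]⟩
  have hle : span K (Set.range ![v₁, v₂]) ≤ LinearMap.range (toLin' L) := by
    rw [span_le, Set.range_subset_iff, Fin.forall_fin_two]
    exact ⟨hmem _ h₁, hmem _ h₂⟩
  have := Submodule.finrank_mono hle
  rw [finrank_span_eq_card hv, Fintype.card_fin] at this
  exact absurd (this.trans hL) (by norm_num)

theorem range_toLin'_eq_span_singleton_of_mulVec {L : Matrix n n K} (hL : L.rank = 1)
    {u v₁ v₂ : n → K} (hspan : span K {u, v₁, v₂} = ⊤) (hu : L *ᵥ u ∈ span K {u}) (h₁ : L *ᵥ v₁ = 0)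
    (h₂ : L *ᵥ v₂ = 0) : LinearMap.range (toLin' L) = span K {u} := by
  have hle : LinearMap.range (toLin' L) ≤ span K {u} := by
    rw [LinearMap.range_eq_map, ← hspan, map_span, span_le]
    rintro _ ⟨x, hx, rfl⟩
    rcases hx with rfl | rfl | rfl <;> simp [toLin'_apply, hu, h₁, h₂]
  refine eq_of_le_of_finrank_le hle ?_
  rw [show Module.finrank K (LinearMap.range (toLin' L)) = 1 from hL]
  simpa using finrank_span_le_card (R := K) ({u} : Set (n → K))

theorem linearIndependent_of_joint_eigenvectors {ι : Type*} {A B : Matrix n n K}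
    (hAB : Commute A B) {v : ι → n → K} {α β : ι → K} (hv : ∀ i, v i ≠ 0)
    (hA : ∀ i, A *ᵥ v i = α i • v i) (hB : ∀ i, B *ᵥ v i = β i • v i)
    (hαβ : Injective fun i => (α i, β i)) : LinearIndependent K v := by
  let f : Fin 2 → Module.End K (n → K) := ![toLinAlgEquiv' A, toLinAlgEquiv' B]
  have hcomm : ∀ i j, Commute (f i) (f j) := by
    have := hAB.map toLinAlgEquiv'
    intro i j
    fin_cases i <;> fin_cases j
    exacts [Commute.refl _, this, this.symm, Commute.refl _]
  have hind := Module.End.independent_iInf_maxGenEigenspace_of_forall_mapsTo f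
    fun i j φ => Module.End.mapsTo_maxGenEigenspace_of_comm (hcomm j i) φ
  let χ : ι → Fin 2 → K := fun i => ![α i, β i]
  have hχ : Injective χ := fun i j hij => hαβ <| Prod.ext (congrFun hij 0) (congrFun hij 1)
  refine (hind.comp hχ).linearIndependent _ (fun i => ?_) hv
  show v i ∈ ⨅ j, (f j).maxGenEigenspace (χ i j)
  simp only [Submodule.mem_iInf, Fin.forall_fin_two]
  constructor <;> apply Module.End.eigenspace_le_maxGenEigenspace <;> simp [f, χ, hA, hB]

theorem encard_le_of_joint_eigenlines {A B : Matrix n n K} (hAB : Commute A B)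
    {S : Set (Submodule K (n → K))}
    (hS : ∀ V ∈ S, ∃ v ≠ 0, V = span K {v} ∧ ∃ α β : K, A *ᵥ v = α • v ∧ B *ᵥ v = β • v)
    (hplane : ¬ ∃ (v₁ v₂ : n → K) (α β : K), LinearIndependent K ![v₁, v₂] ∧
      A *ᵥ v₁ = α • v₁ ∧ A *ᵥ v₂ = α • v₂ ∧ B *ᵥ v₁ = β • v₁ ∧ B *ᵥ v₂ = β • v₂) :
    S.encard ≤ Fintype.card n := by
  choose v hv0 hvV α β hα hβ using fun V : S => hS V V.2
  -- two different lines with the same pair of eigenvalues would span a common eigenplane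
  have hαβ : Injective fun V => (α V, β V) := by
    intro V W hVW
    simp only [Prod.mk.injEq] at hVW
    by_contra hne
    refine hplane ⟨v V, v W, α V, β V, ?_, hα V, hVW.1 ▸ hα W, hβ V, hVW.2 ▸ hβ W⟩
    refine linearIndependent_pair_of_span_singleton_ne (hv0 V) (hv0 W) fun h => hne ?_
    exact Subtype.ext ((hvV V).trans (h.trans (hvV W).symm))
  simpa using (linearIndependent_of_joint_eigenvectors hAB hv0 hα hβ hαβ).encard_le_finrank

theorem SpecialLinearGroup.zpow_mulVec_of_mulVec_eq_smul {g : SpecialLinearGroup n K}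
    {v : n → K} {c : K} (h : (g : Matrix n n K) *ᵥ v = c • v) (k : ℤ) :
    ((g ^ k : SpecialLinearGroup n K) : Matrix n n K) *ᵥ v = c ^ k • v := by
  rcases eq_or_ne v 0 with rfl | hv
  · simp
  have hc : c ≠ 0 := by
    rintro rfl
    apply hv
    rw [← one_mulVec v, ← SpecialLinearGroup.coe_one, ← inv_mul_cancel g,
      SpecialLinearGroup.coe_mul, ← mulVec_mulVec, h, zero_smul, mulVec_zero]
  have hinv : ((g⁻¹ : SpecialLinearGroup n K) : Matrix n n K) *ᵥ v = c⁻¹ • v := by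
    rw [eq_inv_smul_iff₀ hc, ← mulVec_smul, ← h, mulVec_mulVec, ← SpecialLinearGroup.coe_mul,
      inv_mul_cancel, SpecialLinearGroup.coe_one, one_mulVec]
  induction k using Int.induction_on with
  | zero => simp
  | succ k ih =>
    rw [_root_.zpow_add_one, SpecialLinearGroup.coe_mul, ← mulVec_mulVec, h, mulVec_smul, ih,
      smul_smul, zpow_add_one₀ hc, mul_comm]
  | pred k ih =>
    rw [_root_.zpow_sub_one, SpecialLinearGroup.coe_mul, ← mulVec_mulVec, hinv, mulVec_smul, ih,
      smul_smul, zpow_sub_one₀ hc, mul_comm]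

theorem SpecialLinearGroup.zpow_mul_zpow_mulVec {A B : SpecialLinearGroup n K} {v : n → K}
    {α β : K} (hA : (A : Matrix n n K) *ᵥ v = α • v) (hB : (B : Matrix n n K) *ᵥ v = β • v)
    (a b : ℤ) :
    ((A ^ a * B ^ b : SpecialLinearGroup n K) : Matrix n n K) *ᵥ v = (α ^ a * β ^ b) • v := by
  rw [SpecialLinearGroup.coe_mul, ← mulVec_mulVec, zpow_mulVec_of_mulVec_eq_smul hB,
    mulVec_smul, zpow_mulVec_of_mulVec_eq_smul hA, smul_smul, mul_comm]

theorem SpecialLinearGroup.commute_coe_zpow_mul_zpow {A B C : SpecialLinearGroup n K}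
    (hA : Commute C A) (hB : Commute C B) (a b : ℤ) :
    Commute (C : Matrix n n K) ((A ^ a * B ^ b : SpecialLinearGroup n K) : Matrix n n K) :=
  ((hA.zpow_right a).mul_right (hB.zpow_right b)).map SpecialLinearGroup.coeMonoidHom

theorem exists_joint_eigenvector_of_tendsto {A B : Matrix n n ℝ} {g : ℕ → Matrix n n ℝ}
    {L : Matrix n n ℝ} (hg : Tendsto g atTop (𝓝 L)) (hA : ∀ k, Commute A (g k))
    (hB : ∀ k, Commute B (g k)) (hL : L.rank = 1) :
    ∃ v ≠ 0, LinearMap.range (toLin' L) = span ℝ {v} ∧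
      ∃ α β : ℝ, A *ᵥ v = α • v ∧ B *ᵥ v = β • v := by
  obtain ⟨v, hv0, hv⟩ := exists_range_toLin'_eq_span_singleton hL
  obtain ⟨α, hα⟩ :=
    exists_mulVec_eq_smul_of_commute (Commute.of_tendsto hg (Eventually.of_forall hA)) hv
  obtain ⟨β, hβ⟩ :=
    exists_mulVec_eq_smul_of_commute (Commute.of_tendsto hg (Eventually.of_forall hB)) hv
  exact ⟨v, hv0, hv, α, β, hα, hβ⟩

theorem range_toLin'_eq_span_of_tendsto {g : ℕ → Matrix n n ℝ} {L : Matrix n n ℝ}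
    (hg : Tendsto g atTop (𝓝 L)) (hL : L.rank = 1) {u v₁ v₂ : n → ℝ}
    (hv : LinearIndependent ℝ ![v₁, v₂]) (hspan : span ℝ {u, v₁, v₂} = ⊤) {σ χ : ℕ → ℝ}
    (hu : ∀ k, g k *ᵥ u = σ k • u) (h₁ : ∀ k, g k *ᵥ v₁ = χ k • v₁)
    (h₂ : ∀ k, g k *ᵥ v₂ = χ k • v₂) : LinearMap.range (toLin' L) = span ℝ {u} := by
  have hlim : ∀ v, (∀ k, g k *ᵥ v = χ k • v) → Tendsto (fun k => χ k • v) atTop (𝓝 (L *ᵥ v)) :=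
    fun v hv => by simpa only [hv] using tendsto_mulVec hg v
  obtain ⟨a, hχ, ha₁⟩ := exists_tendsto_of_tendsto_smul_right (by simpa using hv.ne_zero 0)
    (hlim v₁ h₁)
  have ha₂ : L *ᵥ v₂ = a • v₂ := tendsto_nhds_unique (hlim v₂ h₂) (hχ.smul_const v₂)
  obtain rfl := eq_zero_of_mulVec_eq_smul_of_rank_le_one hL.le hv ha₁ ha₂
  rw [zero_smul] at ha₁ ha₂
  have hLu : L *ᵥ u ∈ span ℝ {u} :=
    (span ℝ {u}).closed_of_finiteDimensional.mem_of_tendsto (tendsto_mulVec hg u)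
      (Eventually.of_forall fun k => hu k ▸ smul_mem _ _ (mem_span_singleton_self u))
  exact range_toLin'_eq_span_singleton_of_mulVec hL hspan hLu ha₁ ha₂

end Matrix

local notation "M₃" => Matrix (Fin 3) (Fin 3) ℝ
local notation "SL₃" => Matrix.SpecialLinearGroup (Fin 3) ℝ

theorem exists_basis_det_eq_one {v₁ v₂ : Fin 3 → ℝ} (h : LinearIndependent ℝ ![v₁, v₂]) :
    ∃ b : Module.Basis (Fin 3) ℝ (Fin 3 → ℝ),
      b 0 = v₁ ∧ b 1 = v₂ ∧ (Pi.basisFun ℝ (Fin 3)).det b = 1 := by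
  set c := v₁ ⨯₃ v₂
  have hc : c ⬝ᵥ c ≠ 0 :=
    dotProduct_self_eq_zero.not.mpr (crossProduct_ne_zero_iff_linearIndependent.mpr h)
  have hdet : (Pi.basisFun ℝ (Fin 3)).det ![v₁, v₂, (c ⬝ᵥ c)⁻¹ • c] = 1 := by
    rw [Module.Basis.det_apply, Module.Basis.coePiBasisFun.toMatrix_eq_transpose,
      show (![v₁, v₂, _]ᵀ : M₃).det = Matrix.det ![v₁, v₂, _] from Matrix.det_transpose _,
      ← triple_product_eq_det, triple_product_permutation, triple_product_permutation,
      smul_dotProduct, smul_eq_mul, inv_mul_cancel₀ hc]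
  obtain ⟨hli, hspan⟩ := ((Pi.basisFun ℝ (Fin 3)).is_basis_iff_det).mpr (hdet ▸ isUnit_one)
  exact ⟨.mk hli hspan.ge, by simp, by simp, by rwa [Module.Basis.coe_mk]⟩

theorem exists_conj_eq_of_mulVec_eq_self {v₁ v₂ : Fin 3 → ℝ}
    (h : LinearIndependent ℝ ![v₁, v₂]) :
    ∃ g : SL₃, ∀ x : SL₃, (x : M₃) *ᵥ v₁ = v₁ → (x : M₃) *ᵥ v₂ = v₂ →
      ∃ a b : ℝ, ((g * x * g⁻¹ : SL₃) : M₃) = !![1, 0, a; 0, 1, b; 0, 0, 1] := by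
  obtain ⟨b, rfl, rfl, hdet⟩ := exists_basis_det_eq_one h
  set e := Pi.basisFun ℝ (Fin 3)
  have hdet' : (b.toMatrix e).det = 1 := by
    have := congrArg Matrix.det (b.toMatrix_mul_toMatrix_flip e)
    rwa [Matrix.det_mul, Matrix.det_one, ← e.det_apply, hdet, mul_one] at this
  let g : SL₃ := ⟨b.toMatrix e, hdet'⟩
  have hg : ((g⁻¹ : SL₃) : M₃) = e.toMatrix b := by
    rw [← one_mul ((g⁻¹ : SL₃) : M₃), ← e.toMatrix_mul_toMatrix_flip b, mul_assoc,
      show b.toMatrix e = (g : M₃) from rfl, ← Matrix.SpecialLinearGroup.coe_mul, mul_inv_cancel,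
      Matrix.SpecialLinearGroup.coe_one, mul_one]
  refine ⟨g, fun x hx₀ hx₁ => ?_⟩
  have h₀ : Matrix.toLin' (x : M₃) (b 0) = (1 : ℝ) • b 0 := by simpa
  have h₁ : Matrix.toLin' (x : M₃) (b 1) = (1 : ℝ) • b 1 := by simpa
  have hconj : ((g * x * g⁻¹ : SL₃) : M₃) = LinearMap.toMatrix b b (Matrix.toLin' x) := by
    rw [Matrix.SpecialLinearGroup.coe_mul, Matrix.SpecialLinearGroup.coe_mul, hg,
      ← basis_toMatrix_mul_linearMap_toMatrix_mul_basis_toMatrix b e b e,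
      LinearMap.toMatrix_eq_toMatrix', LinearMap.toMatrix'_toLin']
  have hdetx := b.det_eq_of_apply_eq_smul h₀ h₁
  rw [LinearMap.det_toLin', x.2, one_mul, one_mul] at hdetx
  exact ⟨_, _, by rw [hconj, b.toMatrix_eq_of_apply_eq_smul h₀ h₁, ← hdetx]⟩

theorem exists_eigenvector_compl_of_det_eq_one {A : M₃} (hA : A.det = 1) {v₁ v₂ : Fin 3 → ℝ}
    (hv : LinearIndependent ℝ ![v₁, v₂]) {α : ℝ} (hα : α ≠ 1) (hA₁ : A *ᵥ v₁ = α • v₁)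
    (hA₂ : A *ᵥ v₂ = α • v₂) : ∃ u γ, span ℝ {u, v₁, v₂} = ⊤ ∧ A *ᵥ u = γ • u ∧ γ ≠ α := by
  obtain ⟨b, rfl, rfl, -⟩ := exists_basis_det_eq_one hv
  set r := b.repr (A *ᵥ b 2)
  have hAb : A *ᵥ b 2 = r 0 • b 0 + r 1 • b 1 + r 2 • b 2 := by
    have := b.sum_repr (A *ᵥ b 2)
    rwa [Fin.sum_univ_three, eq_comm] at this
  -- `A` acts on the quotient by the plane as `r 2 = α⁻²`, which is not `α` since `α³ ≠ 1`
  have hdet : α * α * r 2 = 1 := by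
    rw [← hA, ← LinearMap.det_toLin']
    exact (b.det_eq_of_apply_eq_smul (f := Matrix.toLin' A) hA₁ hA₂).symm
  have hne : α - r 2 ≠ 0 := fun h => hα (by
    rw [← sub_eq_zero.mp h] at hdet
    nlinarith [sq_nonneg (α - 1), sq_nonneg (α + 1)])
  set u := b 2 - (α - r 2)⁻¹ • (r 0 • b 0 + r 1 • b 1)
  have hAu : A *ᵥ u = r 2 • u := by
    simp only [u, Matrix.mulVec_sub, Matrix.mulVec_smul, Matrix.mulVec_add, hAb, hA₁, hA₂]
    match_scalars <;> field_simp <;> ring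
  have hspan : span ℝ {u, b 0, b 1} = ⊤ := by
    refine eq_top_iff.mpr (b.span_eq ▸ span_le.mpr ?_)
    rintro _ ⟨i, rfl⟩
    fin_cases i
    · exact subset_span (by simp)
    · exact subset_span (by simp)
    · show b 2 ∈ span ℝ {u, b 0, b 1}
      rw [show b 2 = u + (α - r 2)⁻¹ • (r 0 • b 0 + r 1 • b 1) by simp [u]]
      exact add_mem (subset_span (by simp)) (smul_mem _ _ (add_mem
        (smul_mem _ _ (subset_span (by simp))) (smul_mem _ _ (subset_span (by simp)))))
  exact ⟨u, r 2, hspan, hAu, fun h => hne (sub_eq_zero.mpr h.symm)⟩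

theorem exists_complementary_joint_eigenvector {A B : M₃} (hA : A.det = 1) (hB : B.det = 1)
    (hAB : Commute A B) {v₁ v₂ : Fin 3 → ℝ} (hv : LinearIndependent ℝ ![v₁, v₂]) {α β : ℝ}
    (hαβ : α ≠ 1 ∨ β ≠ 1) (hA₁ : A *ᵥ v₁ = α • v₁) (hA₂ : A *ᵥ v₂ = α • v₂)
    (hB₁ : B *ᵥ v₁ = β • v₁) (hB₂ : B *ᵥ v₂ = β • v₂) :
    ∃ u, span ℝ {u, v₁, v₂} = ⊤ ∧ ∃ γ δ : ℝ, A *ᵥ u = γ • u ∧ B *ᵥ u = δ • u := by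
  rcases hαβ with hα | hβ
  · obtain ⟨u, γ, hspan, hAu, hγ⟩ := exists_eigenvector_compl_of_det_eq_one hA hv hα hA₁ hA₂
    obtain ⟨δ, hBu⟩ := Matrix.exists_mulVec_eq_smul_of_commute_of_ne hAB hv hspan hγ hA₁ hA₂ hAu
    exact ⟨u, hspan, γ, δ, hAu, hBu⟩
  · obtain ⟨u, δ, hspan, hBu, hδ⟩ := exists_eigenvector_compl_of_det_eq_one hB hv hβ hB₁ hB₂
    obtain ⟨γ, hAu⟩ :=
      Matrix.exists_mulVec_eq_smul_of_commute_of_ne hAB.symm hv hspan hδ hB₁ hB₂ hBu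
    exact ⟨u, hspan, γ, δ, hAu, hBu⟩

def limitSet {ι : Type*} (ρ : ι → SL₃) : Set (Submodule ℝ (Fin 3 → ℝ)) :=
  { V | ∃ L : M₃,
      (∃ γ : ℕ → ι, Injective γ ∧
        Tendsto (fun n => (frobNorm ↑(ρ (γ n)))⁻¹ • (↑(ρ (γ n)) : M₃)) atTop (𝓝 L)) ∧
      L.rank = 1 ∧ V = LinearMap.range (Matrix.toLin' L) }

section LimitSet

variable {ι : Type*} {ρ : ι → SL₃}

theorem exists_joint_eigenvector_of_mem_limitSet {A B : M₃}
    (hA : ∀ i, Commute A (ρ i)) (hB : ∀ i, Commute B (ρ i)) :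
    ∀ V ∈ limitSet ρ, ∃ v ≠ 0, V = span ℝ {v} ∧ ∃ α β : ℝ, A *ᵥ v = α • v ∧ B *ᵥ v = β • v := by
  rintro _ ⟨L, ⟨γ, -, hL⟩, hrank, rfl⟩
  exact Matrix.exists_joint_eigenvector_of_tendsto hL (fun k => (hA _).smul_right _)
    (fun k => (hB _).smul_right _) hrank

theorem limitSet_subset_singleton {u v₁ v₂ : Fin 3 → ℝ} (hv : LinearIndependent ℝ ![v₁, v₂])
    (hspan : span ℝ {u, v₁, v₂} = ⊤) {σ χ : ι → ℝ} (hu : ∀ i, (ρ i : M₃) *ᵥ u = σ i • u)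
    (h₁ : ∀ i, (ρ i : M₃) *ᵥ v₁ = χ i • v₁) (h₂ : ∀ i, (ρ i : M₃) *ᵥ v₂ = χ i • v₂) :
    limitSet ρ ⊆ {span ℝ {u}} := by
  rintro _ ⟨L, ⟨γ, -, hL⟩, hrank, rfl⟩
  exact Matrix.range_toLin'_eq_span_of_tendsto hL hrank hv hspan
    (fun k => by rw [Matrix.smul_mulVec, hu, smul_smul])
    (fun k => by rw [Matrix.smul_mulVec, h₁, smul_smul])
    (fun k => by rw [Matrix.smul_mulVec, h₂, smul_smul])

end LimitSet

theorem limit_set_of_nonhorospherical_Z2_small_general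
    (A B : Matrix.SpecialLinearGroup (Fin 3) ℝ)
    (hcomm : A * B = B * A)
    (ρ : ℤ × ℤ → Matrix.SpecialLinearGroup (Fin 3) ℝ)
    (hρ : ∀ v : ℤ × ℤ, ρ v = A ^ v.1 * B ^ v.2)
    (hnothoro : ¬ ∃ g : Matrix.SpecialLinearGroup (Fin 3) ℝ,
      (∀ v : ℤ × ℤ, ∃ a b : ℝ,
        ↑(g * ρ v * g⁻¹) = !![1, a, b; 0, 1, 0; 0, 0, 1]) ∨
      (∀ v : ℤ × ℤ, ∃ a b : ℝ,
        ↑(g * ρ v * g⁻¹) = !![1, 0, a; 0, 1, b; 0, 0, 1])) :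
    ∃ x y z : Submodule ℝ (Fin 3 → ℝ),
      { V : Submodule ℝ (Fin 3 → ℝ) |
        ∃ L : Matrix (Fin 3) (Fin 3) ℝ,
          (∃ γ : ℕ → ℤ × ℤ, Function.Injective γ ∧
            Tendsto
              (fun n => (frobNorm ↑(ρ (γ n)))⁻¹ • (↑(ρ (γ n)) : Matrix (Fin 3) (Fin 3) ℝ))
              atTop (nhds L)) ∧
          L.rank = 1 ∧ V = LinearMap.range (Matrix.toLin' L) }
        ⊆ {x, y, z} := by
  have hAB : Commute A B := hcomm
  have hAB' : Commute (A : M₃) B := hAB.map Matrix.SpecialLinearGroup.coeMonoidHom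
  have hρv : ∀ {v : Fin 3 → ℝ} {α β : ℝ}, (A : M₃) *ᵥ v = α • v → (B : M₃) *ᵥ v = β • v →
      ∀ w, (ρ w : M₃) *ᵥ v = (α ^ w.1 * β ^ w.2) • v := fun hA hB w => by
    rw [hρ]
    exact Matrix.SpecialLinearGroup.zpow_mul_zpow_mulVec hA hB w.1 w.2
  change ∃ x y z, limitSet ρ ⊆ {x, y, z}
  by_cases hplane : ∃ (v₁ v₂ : Fin 3 → ℝ) (α β : ℝ), LinearIndependent ℝ ![v₁, v₂] ∧
      (A : M₃) *ᵥ v₁ = α • v₁ ∧ (A : M₃) *ᵥ v₂ = α • v₂ ∧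
      (B : M₃) *ᵥ v₁ = β • v₁ ∧ (B : M₃) *ᵥ v₂ = β • v₂
  swap
  · refine Set.exists_subset_triple_of_encard_le_three
      ((Matrix.encard_le_of_joint_eigenlines hAB' ?_ hplane).trans (by simp))
    refine exists_joint_eigenvector_of_mem_limitSet (fun w => ?_) (fun w => ?_) <;> rw [hρ]
    exacts [Matrix.SpecialLinearGroup.commute_coe_zpow_mul_zpow (.refl A) hAB w.1 w.2,
      Matrix.SpecialLinearGroup.commute_coe_zpow_mul_zpow hAB.symm (.refl B) w.1 w.2]
  obtain ⟨v₁, v₂, α, β, hv, hA₁, hA₂, hB₁, hB₂⟩ := hplane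
  by_cases hunip : α = 1 ∧ β = 1
  · obtain ⟨rfl, rfl⟩ := hunip
    obtain ⟨g, hg⟩ := exists_conj_eq_of_mulVec_eq_self hv
    refine absurd ⟨g, Or.inr fun w => hg (ρ w) ?_ ?_⟩ hnothoro
    · simpa using hρv hA₁ hB₁ w
    · simpa using hρv hA₂ hB₂ w
  obtain ⟨u, hspan, _, _, hAu, hBu⟩ := exists_complementary_joint_eigenvector A.2 B.2 hAB' hv
    (not_and_or.mp hunip) hA₁ hA₂ hB₁ hB₂
  refine ⟨span ℝ {u}, span ℝ {u}, span ℝ {u}, ?_⟩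
  simpa using limitSet_subset_singleton hv hspan (hρv hAu hBu) (hρv hA₁ hB₁) (hρv hA₂ hB₂)

/-- If a discrete ℤ² subgroup ⟨A, B⟩ of SL(3,ℝ) is not contained in any minimal
horospherical subgroup, then its limit set in ℙ(ℝ³) contains at most 3 points. -/
theorem limit_set_of_nonhorospherical_Z2_small
    (A B : Matrix.SpecialLinearGroup (Fin 3) ℝ)
    (hcomm : A * B = B * A)
    (ρ : ℤ × ℤ → Matrix.SpecialLinearGroup (Fin 3) ℝ)
    (hρ : ∀ v : ℤ × ℤ, ρ v = A ^ v.1 * B ^ v.2)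
    (hinj : Function.Injective ρ)
    (hdisc : DiscreteTopology (Set.range ρ))
    (hnothoro : ¬ ∃ g : Matrix.SpecialLinearGroup (Fin 3) ℝ,
      (∀ v : ℤ × ℤ, ∃ a b : ℝ,
        ↑(g * ρ v * g⁻¹) = !![1, a, b; 0, 1, 0; 0, 0, 1]) ∨
      (∀ v : ℤ × ℤ, ∃ a b : ℝ,
        ↑(g * ρ v * g⁻¹) = !![1, 0, a; 0, 1, b; 0, 0, 1])) :
    ∃ x y z : Submodule ℝ (Fin 3 → ℝ),
      { V : Submodule ℝ (Fin 3 → ℝ) |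
        ∃ L : Matrix (Fin 3) (Fin 3) ℝ,
          (∃ γ : ℕ → ℤ × ℤ, Function.Injective γ ∧
            Tendsto
              (fun n => (frobNorm ↑(ρ (γ n)))⁻¹ • (↑(ρ (γ n)) : Matrix (Fin 3) (Fin 3) ℝ))
              atTop (nhds L)) ∧
          L.rank = 1 ∧ V = LinearMap.range (Matrix.toLin' L) }
        ⊆ {x, y, z} :=
  limit_set_of_nonhorospherical_Z2_small_general A B hcomm ρ hρ hnothoro
end

section
/- A lattice in a Cartan subgroup of SL(3,ℝ) is not regular. Precisely: if ρ : ℤ² → SL(3,ℝ) is an injective homomorphism whose image is discrete and consists of diagonal matrices, then ρ is not regular. -/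
open Filter

/-- A homomorphism is regular if it sends every sequence of pairwise distinct
elements to a regular sequence. -/
def IsRegularHom {Γ : Type*} [Group Γ]
    (ρ : Γ →* Matrix.SpecialLinearGroup (Fin 3) ℝ) : Prop :=
  ∀ γ : ℕ → Γ, Function.Injective γ → IsRegularSeq fun n => ρ (γ n)

/-! ### Auxiliary lemmas about diagonal representations -/

section aux
variable {Γ : Type*} [Group Γ]
variable (ρ : Γ →* Matrix.SpecialLinearGroup (Fin 3) ℝ)
variable (hdiag : ∀ v : Γ, ∀ i j : Fin 3, i ≠ j →
      (ρ v : Matrix (Fin 3) (Fin 3) ℝ) i j = 0)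

include hdiag

lemma diag_mul (u v : Γ) (i : Fin 3) :
    (ρ (u * v) : Matrix (Fin 3) (Fin 3) ℝ) i i
      = (ρ u : Matrix (Fin 3) (Fin 3) ℝ) i i * (ρ v : Matrix (Fin 3) (Fin 3) ℝ) i i := by
  have h : (ρ (u * v) : Matrix (Fin 3) (Fin 3) ℝ)
      = (ρ u : Matrix (Fin 3) (Fin 3) ℝ) * (ρ v : Matrix (Fin 3) (Fin 3) ℝ) := by
    rw [map_mul]; rfl
  rw [h, Matrix.mul_apply, Finset.sum_eq_single i]
  · intro k _ hk
    rw [hdiag u i k (Ne.symm hk), zero_mul]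
  · intro hi; exact absurd (Finset.mem_univ i) hi

lemma diag_inv (v : Γ) (i : Fin 3) :
    (ρ v : Matrix (Fin 3) (Fin 3) ℝ) i i * (ρ v⁻¹ : Matrix (Fin 3) (Fin 3) ℝ) i i = 1 := by
  rw [← diag_mul ρ hdiag v v⁻¹ i, mul_inv_cancel, map_one]
  simp

lemma diag_det (v : Γ) :
    (ρ v : Matrix (Fin 3) (Fin 3) ℝ) 0 0 * (ρ v : Matrix (Fin 3) (Fin 3) ℝ) 1 1
      * (ρ v : Matrix (Fin 3) (Fin 3) ℝ) 2 2 = 1 := by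
  have h := (ρ v).2
  rw [Matrix.det_fin_three] at h
  rw [hdiag v 0 1 (by decide), hdiag v 0 2 (by decide), hdiag v 1 0 (by decide),
    hdiag v 1 2 (by decide), hdiag v 2 0 (by decide), hdiag v 2 1 (by decide)] at h
  linarith [h]

lemma frob_sq (v : Γ) :
    frobNorm (ρ v : Matrix (Fin 3) (Fin 3) ℝ) ^ 2
      = (ρ v : Matrix (Fin 3) (Fin 3) ℝ) 0 0 ^ 2 + (ρ v : Matrix (Fin 3) (Fin 3) ℝ) 1 1 ^ 2
        + (ρ v : Matrix (Fin 3) (Fin 3) ℝ) 2 2 ^ 2 := by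
  rw [frobNorm, Real.sq_sqrt (by positivity)]
  rw [Fin.sum_univ_three]
  simp only [Fin.sum_univ_three]
  rw [hdiag v 0 1 (by decide), hdiag v 0 2 (by decide), hdiag v 1 0 (by decide),
    hdiag v 1 2 (by decide), hdiag v 2 0 (by decide), hdiag v 2 1 (by decide)]
  ring

omit hdiag in
lemma frob_ge (v : Γ) :
    |(ρ v : Matrix (Fin 3) (Fin 3) ℝ) 2 2|
      ≤ frobNorm (ρ v : Matrix (Fin 3) (Fin 3) ℝ) := by
  rw [frobNorm, ← Real.sqrt_sq_eq_abs]
  apply Real.sqrt_le_sqrt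
  rw [Fin.sum_univ_three]
  simp only [Fin.sum_univ_three]
  nlinarith [sq_nonneg ((ρ v : Matrix (Fin 3) (Fin 3) ℝ) 0 0),
    sq_nonneg ((ρ v : Matrix (Fin 3) (Fin 3) ℝ) 0 1), sq_nonneg ((ρ v : Matrix (Fin 3) (Fin 3) ℝ) 0 2),
    sq_nonneg ((ρ v : Matrix (Fin 3) (Fin 3) ℝ) 1 0), sq_nonneg ((ρ v : Matrix (Fin 3) (Fin 3) ℝ) 1 1),
    sq_nonneg ((ρ v : Matrix (Fin 3) (Fin 3) ℝ) 1 2), sq_nonneg ((ρ v : Matrix (Fin 3) (Fin 3) ℝ) 2 0),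
    sq_nonneg ((ρ v : Matrix (Fin 3) (Fin 3) ℝ) 2 1)]

lemma Qbound (v : Γ)
    (h1 : |Real.log (abs ((ρ v : Matrix (Fin 3) (Fin 3) ℝ) 0 0))
        - Real.log (abs ((ρ v : Matrix (Fin 3) (Fin 3) ℝ) 1 1))| ≤ 1)
    (h2 : 0 ≤ Real.log |(ρ v : Matrix (Fin 3) (Fin 3) ℝ) 0 0|
        + Real.log |(ρ v : Matrix (Fin 3) (Fin 3) ℝ) 1 1|) :
    frobNorm (ρ v : Matrix (Fin 3) (Fin 3) ℝ) ^ 2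
      / frobNorm (ρ v⁻¹ : Matrix (Fin 3) (Fin 3) ℝ) ≤ 7 := by
  set x := (ρ v : Matrix (Fin 3) (Fin 3) ℝ) 0 0 with hxdef
  set y := (ρ v : Matrix (Fin 3) (Fin 3) ℝ) 1 1 with hydef
  set z := (ρ v : Matrix (Fin 3) (Fin 3) ℝ) 2 2 with hzdef
  have hx : x ≠ 0 := left_ne_zero_of_mul_eq_one (diag_inv ρ hdiag v 0)
  have hy : y ≠ 0 := left_ne_zero_of_mul_eq_one (diag_inv ρ hdiag v 1)
  have hz : z ≠ 0 := left_ne_zero_of_mul_eq_one (diag_inv ρ hdiag v 2)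
  have hX : (0:ℝ) < |x| := abs_pos.2 hx
  have hY : (0:ℝ) < |y| := abs_pos.2 hy
  have hZ : (0:ℝ) < |z| := abs_pos.2 hz
  have hdet : |x| * |y| * |z| = 1 := by
    rw [← abs_mul, ← abs_mul, diag_det ρ hdiag v]; norm_num
  have he : (0:ℝ) < Real.exp 1 := Real.exp_pos 1
  have hxy : |x| ≤ Real.exp 1 * |y| := by
    have h := (abs_le.1 h1).2
    have : |x| = Real.exp (Real.log |x|) := (Real.exp_log hX).symm
    rw [this]
    calc Real.exp (Real.log |x|) ≤ Real.exp (1 + Real.log |y|) :=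
        Real.exp_le_exp.2 (by linarith)
      _ = Real.exp 1 * |y| := by rw [Real.exp_add, Real.exp_log hY]
  have hyx : |y| ≤ Real.exp 1 * |x| := by
    have h := (abs_le.1 h1).1
    have : |y| = Real.exp (Real.log |y|) := (Real.exp_log hY).symm
    rw [this]
    calc Real.exp (Real.log |y|) ≤ Real.exp (1 + Real.log |x|) :=
        Real.exp_le_exp.2 (by linarith)
      _ = Real.exp 1 * |x| := by rw [Real.exp_add, Real.exp_log hX]
  have hXY1 : 1 ≤ |x| * |y| := by
    have hlog : (0:ℝ) ≤ Real.log (|x| * |y|) := by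
      rw [Real.log_mul hX.ne' hY.ne']; exact h2
    have h := Real.exp_le_exp.2 hlog
    rwa [Real.exp_zero, Real.exp_log (by positivity)] at h
  have hinvz : (ρ v⁻¹ : Matrix (Fin 3) (Fin 3) ℝ) 2 2 = z⁻¹ :=
    eq_inv_of_mul_eq_one_left (by rw [mul_comm]; exact diag_inv ρ hdiag v 2)
  have hD : |x| * |y| ≤ frobNorm (ρ v⁻¹ : Matrix (Fin 3) (Fin 3) ℝ) := by
    have hfg := frob_ge ρ (v⁻¹)
    rw [hinvz, abs_inv] at hfg
    have : |x| * |y| = |z|⁻¹ := by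
      field_simp
      linarith [hdet]
    rw [this]
    exact hfg
  have hN : frobNorm (ρ v : Matrix (Fin 3) (Fin 3) ℝ) ^ 2 = x^2 + y^2 + z^2 :=
    frob_sq ρ hdiag v
  have hNn : (0:ℝ) ≤ x^2 + y^2 + z^2 := by positivity
  have hDpos : (0:ℝ) < |x| * |y| := by positivity
  have key : (x^2 + y^2 + z^2) / (|x| * |y|) ≤ 2 * Real.exp 1 + 1 := by
    rw [div_le_iff₀ hDpos]
    have hzle : |z| ≤ 1 := by nlinarith
    nlinarith [sq_abs x, sq_abs y, sq_abs z, mul_pos hX hY,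
      mul_le_mul_of_nonneg_right hxy hX.le, mul_le_mul_of_nonneg_right hyx hY.le,
      mul_le_mul hzle hzle (abs_nonneg z) zero_le_one, hX.le, hY.le, hZ.le]
  have hfinal : frobNorm (ρ v : Matrix (Fin 3) (Fin 3) ℝ) ^ 2
      / frobNorm (ρ v⁻¹ : Matrix (Fin 3) (Fin 3) ℝ) ≤ (x^2+y^2+z^2) / (|x| * |y|) := by
    rw [hN]
    gcongr
  have hexp : Real.exp 1 < 2.7182818286 := Real.exp_one_lt_d9
  calc frobNorm (ρ v : Matrix (Fin 3) (Fin 3) ℝ) ^ 2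
      / frobNorm (ρ v⁻¹ : Matrix (Fin 3) (Fin 3) ℝ) ≤ (x^2+y^2+z^2) / (|x| * |y|) := hfinal
    _ ≤ 2 * Real.exp 1 + 1 := key
    _ ≤ 7 := by linarith

end aux

/-! ### Small values of an additive homomorphism `ℤ² → ℝ` -/

lemma prod_repr (m n : ℤ) : ((m, n) : ℤ × ℤ) = m • ((1,0) : ℤ × ℤ) + n • ((0,1) : ℤ × ℤ) := by
  simp [Prod.ext_iff]

lemma small_values_infinite (F : ℤ × ℤ →+ ℝ) :
    {v : ℤ × ℤ | |F v| ≤ 1}.Infinite := by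
  by_cases hker : ∃ u : ℤ × ℤ, u ≠ 0 ∧ F u = 0
  · obtain ⟨u, hu, hFu⟩ := hker
    have hu1 : u.1 ≠ 0 ∨ u.2 ≠ 0 := by
      by_contra hc; push_neg at hc; exact hu (Prod.ext hc.1 hc.2)
    refine Set.infinite_of_injective_forall_mem (f := fun n : ℕ => (n : ℤ) • u) ?_ ?_
    · intro a b hab
      have h1 : (a:ℤ) * u.1 = (b:ℤ) * u.1 := by
        have := congrArg Prod.fst hab
        simpa [Prod.smul_fst, smul_eq_mul] using this
      have h2 : (a:ℤ) * u.2 = (b:ℤ) * u.2 := by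
        have := congrArg Prod.snd hab
        simpa [Prod.smul_snd, smul_eq_mul] using this
      rcases hu1 with h | h
      · exact Nat.cast_injective (mul_right_cancel₀ h h1)
      · exact Nat.cast_injective (mul_right_cancel₀ h h2)
    · intro n
      simp only [Set.mem_setOf_eq, map_zsmul, hFu, smul_zero, abs_zero]
      norm_num
  · push_neg at hker
    have hinj : ∀ u : ℤ × ℤ, F u = 0 → u = 0 := by
      intro u hu
      by_contra h
      exact hker u h hu
    set s := F (1,0) with hs
    set t := F (0,1) with ht
    have hF : ∀ m n : ℤ, F (m, n) = m • s + n • t := by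
      intro m n
      rw [prod_repr m n, map_add, map_zsmul, map_zsmul]
    have hnc : ∀ a : ℝ, F.range ≠ AddSubgroup.closure {a} := by
      intro a ha
      have hsmem : s ∈ AddSubgroup.closure ({a} : Set ℝ) := by
        rw [← ha]; exact ⟨(1,0), rfl⟩
      have htmem : t ∈ AddSubgroup.closure ({a} : Set ℝ) := by
        rw [← ha]; exact ⟨(0,1), rfl⟩
      rw [AddSubgroup.mem_closure_singleton] at hsmem htmem
      obtain ⟨p, hp⟩ := hsmem
      obtain ⟨q, hq⟩ := htmem
      have h0 : F (q, -p) = 0 := by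
        rw [hF, ← hp, ← hq, smul_smul, smul_smul, ← add_smul]
        have hz : q * p + -p * q = 0 := by ring
        rw [hz, zero_smul]
      have hthis := hinj _ h0
      rw [Prod.ext_iff] at hthis
      have hq0 : q = 0 := hthis.1
      have hp0 : p = 0 := by have h2 : -p = 0 := hthis.2; omega
      have hs0 : s = 0 := by rw [← hp, hp0]; simp
      have hone : ((1,0) : ℤ × ℤ) = 0 := hinj _ (by rw [← hs, hs0])
      simp [Prod.ext_iff] at hone
    have hdense : Dense (F.range : Set ℝ) := by
      rcases AddSubgroup.dense_or_cyclic F.range with h | ⟨a, ha⟩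
      · exact h
      · exact absurd ha (hnc a)
    have hex : ∀ n : ℕ, ∃ w : ℤ × ℤ, F w ∈ Set.Ioo ((1:ℝ)/(n+2)) (1/(n+1)) := by
      intro n
      have hp1 : (0:ℝ) < (n:ℝ) + 1 := by positivity
      have hne : (Set.Ioo ((1:ℝ)/(n+2)) (1/(n+1))).Nonempty :=
        Set.nonempty_Ioo.2 (one_div_lt_one_div_of_lt hp1 (by linarith))
      obtain ⟨x, hxS, hxI⟩ := hdense.exists_mem_open isOpen_Ioo hne
      obtain ⟨w, hw⟩ := hxS
      exact ⟨w, by rw [hw]; exact hxI⟩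
    choose w hw using hex
    refine Set.infinite_of_injective_forall_mem (f := w) ?_ ?_
    · intro a b hab
      by_contra hne
      wlog hlt : a < b generalizing a b
      · exact this hab.symm (Ne.symm hne) (by omega)
      have h1 := hw a
      have h2 := hw b
      rw [hab] at h1
      have hle : (1:ℝ)/(b+1) ≤ 1/(a+2) := by
        apply one_div_le_one_div_of_le
        · positivity
        · have : (a:ℝ) + 1 ≤ (b:ℝ) := by exact_mod_cast Nat.succ_le_of_lt hlt
          linarith
      simp only [Set.mem_Ioo] at h1 h2
      linarith [h1.1, h2.2]
    · intro n
      have h := hw n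
      simp only [Set.mem_Ioo] at h
      have h1 : (0:ℝ) < 1/(n+2) := by positivity
      have h2 : (1:ℝ)/(n+1) ≤ 1 := by
        rw [div_le_one (by positivity)]
        have : (0:ℝ) ≤ (n:ℝ) := Nat.cast_nonneg n
        linarith
      simp only [Set.mem_setOf_eq]
      rw [abs_le]
      constructor <;> linarith [h.1, h.2]

/-- A lattice in a Cartan subgroup of SL(3,ℝ) is not regular. -/
theorem lattice_in_Cartan_not_regular
    (ρ : Multiplicative (ℤ × ℤ) →* Matrix.SpecialLinearGroup (Fin 3) ℝ)
    (hinj : Function.Injective ρ)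
    (hdisc : DiscreteTopology ρ.range)
    (hdiag : ∀ v : Multiplicative (ℤ × ℤ), ∀ i j : Fin 3, i ≠ j →
      (ρ v : Matrix (Fin 3) (Fin 3) ℝ) i j = 0) :
    ¬ IsRegularHom ρ := by
  intro hreg
  -- diagonal entry functions
  set M : ℤ × ℤ → Matrix (Fin 3) (Fin 3) ℝ :=
    fun v => (ρ (Multiplicative.ofAdd v) : Matrix (Fin 3) (Fin 3) ℝ) with hM
  have hx : ∀ (i : Fin 3) (v : ℤ × ℤ), M v i i ≠ 0 := fun i v =>
    left_ne_zero_of_mul_eq_one (diag_inv ρ hdiag (Multiplicative.ofAdd v) i)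
  have hlogadd : ∀ (i : Fin 3) (u v : ℤ × ℤ),
      Real.log |M (u + v) i i| = Real.log |M u i i| + Real.log |M v i i| := by
    intro i u v
    have hm : M (u + v) i i = M u i i * M v i i := by
      have h := diag_mul ρ hdiag (Multiplicative.ofAdd u) (Multiplicative.ofAdd v) i
      simpa [hM, ofAdd_add] using h
    rw [hm, abs_mul, Real.log_mul (abs_ne_zero.2 (hx i u)) (abs_ne_zero.2 (hx i v))]
  have hlogneg : ∀ (i : Fin 3) (v : ℤ × ℤ),
      Real.log |M (-v) i i| = - Real.log |M v i i| := by
    intro i v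
    have h := hlogadd i v (-v)
    have h0 : M (v + -v) i i = 1 := by
      simp only [hM, add_neg_cancel]
      have : Multiplicative.ofAdd ((0 : ℤ × ℤ)) = 1 := rfl
      rw [this, map_one]
      simp
    rw [h0] at h
    simp only [abs_one, Real.log_one] at h
    linarith [h]
  -- the additive homomorphism v ↦ log|x v| - log|y v|
  set F : ℤ × ℤ →+ ℝ := AddMonoidHom.mk'
    (fun v => Real.log |M v 0 0| - Real.log |M v 1 1|)
    (by
      intro u v
      show Real.log |M (u + v) 0 0| - Real.log |M (u + v) 1 1|
        = (Real.log |M u 0 0| - Real.log |M u 1 1|)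
          + (Real.log |M v 0 0| - Real.log |M v 1 1|)
      rw [hlogadd 0 u v, hlogadd 1 u v]
      ring) with hFdef
  set G : ℤ × ℤ → ℝ := fun v => Real.log |M v 0 0| + Real.log |M v 1 1| with hGdef
  set T : Set (ℤ × ℤ) := {v | |F v| ≤ 1 ∧ 0 ≤ G v} with hTdef
  have hsub : {v : ℤ × ℤ | |F v| ≤ 1} ⊆ T ∪ (Neg.neg '' T) := by
    intro v hv
    by_cases hG : 0 ≤ G v
    · exact Or.inl ⟨hv, hG⟩
    · right
      refine ⟨-v, ⟨?_, ?_⟩, neg_neg v⟩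
      · rw [map_neg, abs_neg]; exact hv
      · have h0 := hlogneg 0 v
        have h1 := hlogneg 1 v
        simp only [hGdef]
        rw [h0, h1]
        push_neg at hG
        simp only [hGdef] at hG
        linarith
  have hTinf : T.Infinite := by
    rcases Set.infinite_union.1 ((small_values_infinite F).mono hsub) with h | h
    · exact h
    · exact Set.Infinite.of_image _ h
  -- construct the injective sequence
  set e := hTinf.natEmbedding with hedef
  set γ : ℕ → Multiplicative (ℤ × ℤ) := fun n => Multiplicative.ofAdd ((e n : ℤ × ℤ)) with hγdef
  have hγinj : Function.Injective γ := by
    intro a b hab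
    apply e.injective
    apply Subtype.coe_injective
    exact Multiplicative.ofAdd.injective hab
  have hQ := hreg γ hγinj
  rw [IsRegularSeq] at hQ
  obtain ⟨n, hn⟩ := (hQ.eventually (eventually_ge_atTop (8:ℝ))).exists
  have hmem : (e n : ℤ × ℤ) ∈ T := (e n).2
  obtain ⟨hm1, hm2⟩ := hmem
  have hb := Qbound ρ hdiag (γ n) hm1 hm2
  rw [← map_inv ρ (γ n)] at hn
  linarith [hb, hn]
end
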